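/- arXiv:2011.01796 — 7 statements merged into one kernel-verified Lean document; each statement's English description precedes it below -/
import Mathlib

section
/- Let A be a set-valued operator on H, let q ∈ H, let θ > 0 and let σ, α ∈ ℝ. Define S := (A_{−q})^{(θ,σ)}, i.e. S(x) = {a + σx : a ∈ A(θx + q)}. Then: (a) A is α-monotone if and only if S is (θα + σ)-monotone; (b) A is maximally α-monotone if and only if S is maximally (θα + σ)-monotone. -/
open scoped RealInnerProductSpace

/-- `A` is `α`-monotone. -/
def IsMonotoneOp {H : Type*} [NormedAddCommGroup H] [InnerProductSpace ℝ H]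
    (α : ℝ) (A : H → Set H) : Prop :=
  ∀ x y u v : H, u ∈ A x → v ∈ A y → α * ‖x - y‖ ^ 2 ≤ ⟪x - y, u - v⟫

/-- `A` is maximally `α`-monotone. -/
def IsMaxMonotoneOp {H : Type*} [NormedAddCommGroup H] [InnerProductSpace ℝ H]
    (α : ℝ) (A : H → Set H) : Prop :=
  IsMonotoneOp α A ∧
    ∀ x u : H, (∀ y v : H, v ∈ A y → α * ‖x - y‖ ^ 2 ≤ ⟪x - y, u - v⟫) → u ∈ A x

/-!
Both notions only involve the graph of an operator and the pairwise inequality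
`α ‖x - y‖² ≤ ⟪x - y, u - v⟫` between its points. The affine bijection
`(x, w) ↦ (θ x + q, w - σ x)` of `H × H` maps the graph of `S` onto the graph of `A`, and
since it scales `x - y` by `θ` and shifts `u - v` by `-σ (x - y)`, it turns
`(θα + σ)`-monotone pairs into `α`-monotone pairs and back, so it transports (maximal)
monotonicity in both directions.
-/

section

variable {H : Type*} [NormedAddCommGroup H] [InnerProductSpace ℝ H]

def MonotonePair (α : ℝ) (p p' : H × H) : Prop :=
  α * ‖p.1 - p'.1‖ ^ 2 ≤ ⟪p.1 - p'.1, p.2 - p'.2⟫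

def IsMonotoneConjugacy (e : H × H ≃ H × H) (α : ℝ) (A : H → Set H) (β : ℝ)
    (B : H → Set H) : Prop :=
  (∀ p : H × H, p.2 ∈ A p.1 ↔ (e p).2 ∈ B (e p).1) ∧
    ∀ p p' : H × H, MonotonePair α p p' ↔ MonotonePair β (e p) (e p')

namespace IsMonotoneConjugacy

variable {e : H × H ≃ H × H} {α β : ℝ} {A B : H → Set H}

theorem symm (h : IsMonotoneConjugacy e α A β B) : IsMonotoneConjugacy e.symm β B α A := by
  refine ⟨fun p => ?_, fun p p' => ?_⟩
  · simpa using (h.1 (e.symm p)).symm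
  · simpa using (h.2 (e.symm p) (e.symm p')).symm

theorem isMonotoneOp (h : IsMonotoneConjugacy e α A β B) (hA : IsMonotoneOp α A) :
    IsMonotoneOp β B := by
  intro x y u v hu hv
  have hgraph : ∀ {z w : H}, w ∈ B z → (e.symm (z, w)).2 ∈ A (e.symm (z, w)).1 := fun hw =>
    (h.1 _).2 (by simpa using hw)
  simpa [MonotonePair] using
    (h.2 (e.symm (x, u)) (e.symm (y, v))).1 (hA _ _ _ _ (hgraph hu) (hgraph hv))

theorem isMaxMonotoneOp (h : IsMonotoneConjugacy e α A β B) (hA : IsMaxMonotoneOp α A) :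
    IsMaxMonotoneOp β B := by
  refine ⟨h.isMonotoneOp hA.1, fun x u hu => ?_⟩
  have hmem : (e.symm (x, u)).2 ∈ A (e.symm (x, u)).1 := by
    refine hA.2 _ _ fun y v hv => (h.2 _ (y, v)).2 ?_
    simpa [MonotonePair] using hu _ _ ((h.1 (y, v)).1 hv)
  simpa using (h.1 _).1 hmem

theorem isMonotoneOp_iff (h : IsMonotoneConjugacy e α A β B) :
    IsMonotoneOp α A ↔ IsMonotoneOp β B :=
  ⟨h.isMonotoneOp, h.symm.isMonotoneOp⟩

theorem isMaxMonotoneOp_iff (h : IsMonotoneConjugacy e α A β B) :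
    IsMaxMonotoneOp α A ↔ IsMaxMonotoneOp β B :=
  ⟨h.isMaxMonotoneOp, h.symm.isMaxMonotoneOp⟩

end IsMonotoneConjugacy

noncomputable def strengtheningEquiv (q : H) {θ : ℝ} (hθ : θ ≠ 0) (σ : ℝ) : H × H ≃ H × H where
  toFun p := (θ • p.1 + q, p.2 - σ • p.1)
  invFun p := (θ⁻¹ • (p.1 - q), p.2 + σ • θ⁻¹ • (p.1 - q))
  left_inv p := by simp [hθ]
  right_inv p := by simp [hθ]

theorem monotonePair_strengtheningEquiv_iff (q : H) {θ : ℝ} (hθ : 0 < θ) (σ α : ℝ)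
    (p p' : H × H) :
    MonotonePair (θ * α + σ) p p' ↔
      MonotonePair α (strengtheningEquiv q hθ.ne' σ p) (strengtheningEquiv q hθ.ne' σ p') := by
  obtain ⟨x, w⟩ := p
  obtain ⟨y, z⟩ := p'
  have hdiff : θ • x + q - (θ • y + q) = θ • (x - y) := by rw [smul_sub]; abel
  have hshift : w - σ • x - (z - σ • y) = (w - z) - σ • (x - y) := by rw [smul_sub]; abel
  have hinner : ⟪θ • (x - y), (w - z) - σ • (x - y)⟫ = θ * (⟪x - y, w - z⟫ - σ * ‖x - y‖ ^ 2) := by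
    rw [real_inner_smul_left, inner_sub_right, real_inner_smul_right, real_inner_self_eq_norm_sq]
  have hnorm : α * ‖θ • (x - y)‖ ^ 2 = θ * (θ * α * ‖x - y‖ ^ 2) := by
    rw [norm_smul, Real.norm_of_nonneg hθ.le]; ring
  simp only [MonotonePair, strengtheningEquiv, Equiv.coe_fn_mk]
  rw [hdiff, hshift, hinner, hnorm, mul_le_mul_iff_right₀ hθ]
  constructor <;> intro h <;> linarith

def innerStrengthening (A : H → Set H) (q : H) (θ σ : ℝ) (x : H) : Set H :=
  {w : H | ∃ a ∈ A (θ • x + q), w = a + σ • x}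

theorem isMonotoneConjugacy_innerStrengthening (A : H → Set H) (q : H) {θ : ℝ} (hθ : 0 < θ)
    (σ α : ℝ) :
    IsMonotoneConjugacy (strengtheningEquiv q hθ.ne' σ) (θ * α + σ)
      (innerStrengthening A q θ σ) α A := by
  refine ⟨fun p => ?_, monotonePair_strengtheningEquiv_iff q hθ σ α⟩
  obtain ⟨x, w⟩ := p
  change w ∈ innerStrengthening A q θ σ x ↔ w - σ • x ∈ A (θ • x + q)
  constructor
  · rintro ⟨a, ha, rfl⟩
    rwa [add_sub_cancel_right]
  · exact fun ha => ⟨_, ha, (sub_add_cancel w _).symm⟩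

end

theorem strengthening_monotone_general {H : Type*} [NormedAddCommGroup H] [InnerProductSpace ℝ H]
    (A : H → Set H) (q : H) (θ : ℝ) (hθ : 0 < θ) (σ α : ℝ)
    (S : H → Set H) (hS : ∀ x : H, S x = {w : H | ∃ a ∈ A (θ • x + q), w = a + σ • x}) :
    (IsMonotoneOp α A ↔ IsMonotoneOp (θ * α + σ) S) ∧
      (IsMaxMonotoneOp α A ↔ IsMaxMonotoneOp (θ * α + σ) S) := by
  obtain rfl : S = innerStrengthening A q θ σ := funext hS
  have h := isMonotoneConjugacy_innerStrengthening A q hθ σ α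
  exact ⟨h.isMonotoneOp_iff.symm, h.isMaxMonotoneOp_iff.symm⟩

/-- The `(θ,σ)`-strengthening `S` of the inner perturbation `A_{−q}` satisfies:
`A` is (maximally) `α`-monotone iff `S` is (maximally) `(θα + σ)`-monotone. -/
theorem strengthening_monotone {H : Type*} [NormedAddCommGroup H] [InnerProductSpace ℝ H]
    [CompleteSpace H]
    (A : H → Set H) (q : H) (θ : ℝ) (hθ : 0 < θ) (σ α : ℝ)
    (S : H → Set H) (hS : ∀ x : H, S x = {w : H | ∃ a ∈ A (θ • x + q), w = a + σ • x}) :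
    (IsMonotoneOp α A ↔ IsMonotoneOp (θ * α + σ) S) ∧
      (IsMaxMonotoneOp α A ↔ IsMaxMonotoneOp (θ * α + σ) S) :=
  strengthening_monotone_general A q θ hθ σ α S hS
end

section
/- Let A be a set-valued operator on H, let q ∈ H, let θ > 0, let σ ∈ ℝ and let γ > 0 with 1 + γσ ≠ 0. Define S := (A_{−q})^{(θ,σ)}, i.e. S(x) = {a + σx : a ∈ A(θx + q)}. Then for all z, u ∈ H: u ∈ J_{γS}(z) if and only if θu + q ∈ J_{(γθ/(1+γσ))A}((θ/(1+γσ))·z + q); explicitly, z − u ∈ γ•S(u) if and only if ((θ/(1+γσ))·z + q) − (θu + q) ∈ (γθ/(1+γσ))•A(θu + q). -/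
/-!
Unfolding `S`, the left-hand side says `z = (1 + γσ)u + γa` for some `a ∈ A(θu + q)`.
Multiplying this by the nonzero scalar `θ/(1 + γσ)` turns it into the right-hand side, and
scaling by a nonzero scalar preserves membership in a scaled set.
-/

open scoped Pointwise

section

variable {K E : Type*} [AddCommGroup E]

theorem sub_mem_smul_translate_iff [CommRing K] [Module K E] (γ σ : K) (T : Set E) (z u : E) :
    z - u ∈ γ • {w : E | ∃ a ∈ T, w = a + σ • u} ↔ z - (1 + γ * σ) • u ∈ γ • T := by
  have key (a : E) : γ • (a + σ • u) = z - u ↔ γ • a = z - (1 + γ * σ) • u := by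
    rw [eq_sub_iff_add_eq, eq_sub_iff_add_eq,
      show γ • (a + σ • u) + u = γ • a + (1 + γ * σ) • u by module]
  simp only [Set.mem_smul_set, Set.mem_ofPred_eq]
  constructor
  · rintro ⟨_, ⟨a, ha, rfl⟩, hw⟩
    exact ⟨a, ha, (key a).1 hw⟩
  · rintro ⟨a, ha, hw⟩
    exact ⟨a + σ • u, ⟨a, ha, rfl⟩, (key a).2 hw⟩

theorem sub_mem_div_smul_set_iff [Field K] [Module K E] {θ κ : K} (hθ : θ ≠ 0) (hκ : κ ≠ 0)
    (γ : K) (T : Set E) (q z u : E) :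
    ((θ / κ) • z + q) - (θ • u + q) ∈ (γ * θ / κ) • T ↔ z - κ • u ∈ γ • T := by
  have hlhs : ((θ / κ) • z + q) - (θ • u + q) = (θ / κ) • (z - κ • u) := by
    rw [add_sub_add_right_eq_sub, smul_sub, smul_smul, div_mul_cancel₀ θ hκ]
  have hset : (γ * θ / κ) • T = (θ / κ) • γ • T := by
    rw [smul_smul, mul_div_assoc, mul_comm]
  rw [hlhs, hset, Set.smul_mem_smul_set_iff₀ (div_ne_zero hθ hκ)]

end

theorem strengthening_resolvent_general {H : Type*} [NormedAddCommGroup H] [InnerProductSpace ℝ H]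
    (A : H → Set H) (q : H) (θ : ℝ) (hθ : 0 < θ) (σ γ : ℝ)
    (hγσ : 1 + γ * σ ≠ 0)
    (S : H → Set H) (hS : ∀ x : H, S x = {w : H | ∃ a ∈ A (θ • x + q), w = a + σ • x}) :
    ∀ z u : H,
      z - u ∈ γ • S u ↔
        ((θ / (1 + γ * σ)) • z + q) - (θ • u + q) ∈
          (γ * θ / (1 + γ * σ)) • A (θ • u + q) := by
  intro z u
  rw [hS, sub_mem_smul_translate_iff, sub_mem_div_smul_set_iff hθ.ne' hγσ]

/-- Resolvent identity for the `(θ,σ)`-strengthening `S` of the inner perturbation `A_{−q}`: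
`u ∈ J_{γS}(z)` iff `θu + q ∈ J_{(γθ/(1+γσ))A}((θ/(1+γσ))·z + q)`, stated explicitly via
the characterization `u ∈ J_{γA}(z) ⟺ z − u ∈ γ•A(u)`. -/
theorem strengthening_resolvent {H : Type*} [NormedAddCommGroup H] [InnerProductSpace ℝ H]
    [CompleteSpace H]
    (A : H → Set H) (q : H) (θ : ℝ) (hθ : 0 < θ) (σ γ : ℝ) (hγ : 0 < γ)
    (hγσ : 1 + γ * σ ≠ 0)
    (S : H → Set H) (hS : ∀ x : H, S x = {w : H | ∃ a ∈ A (θ • x + q), w = a + σ • x}) :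
    ∀ z u : H,
      z - u ∈ γ • S u ↔
        ((θ / (1 + γ * σ)) • z + q) - (θ • u + q) ∈
          (γ * θ / (1 + γ * σ)) • A (θ • u + q) :=
  strengthening_resolvent_general A q θ hθ σ γ hγσ S hS
end

section
/- Let B : H → H, let q ∈ H, let θ > 0, let σ > 0 and let β > 0. Then: (a) B is β-cocoercive if and only if the map x ↦ B(θx + q) is (β/θ)-cocoercive; (b) if B is β-cocoercive, then the map x ↦ B(θx + q) + σx is μ-cocoercive with μ = (θ/β + σ)^{−1}. -/
open scoped RealInnerProductSpace

/-! Substituting `θ • x + q` for `x` scales the difference `x - y` by `θ`, so it divides the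
cocoercivity constant by `θ`; the substitution is invertible, which gives the converse. For a
`γ`-cocoercive `B`, cocoercivity and Cauchy–Schwarz make `B` Lipschitz with constant `1 / γ`, and then the cross terms
of `‖B x - B y + σ (x - y)‖²` are controlled by the two inequalities
`γ ‖B x - B y‖² ≤ ⟪x - y, B x - B y⟫ ≤ ‖x - y‖² / γ`. -/

section

variable {H : Type*} [NormedAddCommGroup H] [InnerProductSpace ℝ H]

def IsCocoercive (β : ℝ) (B : H → H) : Prop :=
  ∀ x y : H, β * ‖B x - B y‖ ^ 2 ≤ ⟪x - y, B x - B y⟫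

namespace IsCocoercive

variable {β γ σ θ : ℝ} {B : H → H}

theorem comp_smul_add (hB : IsCocoercive β B) (hθ : 0 < θ) (q : H) :
    IsCocoercive (β / θ) (fun x => B (θ • x + q)) := by
  intro x y
  have h := hB (θ • x + q) (θ • y + q)
  rw [show θ • x + q - (θ • y + q) = θ • (x - y) by module, real_inner_smul_left] at h
  rw [div_mul_eq_mul_div, div_le_iff₀ hθ]
  linarith

theorem mul_norm_sub_le (hB : IsCocoercive γ B) (x y : H) :
    γ * ‖B x - B y‖ ≤ ‖x - y‖ := by
  rcases (norm_nonneg (B x - B y)).eq_or_lt with h | h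
  · rw [← h, mul_zero]
    exact norm_nonneg _
  · have h' : γ * ‖B x - B y‖ * ‖B x - B y‖ ≤ ‖x - y‖ * ‖B x - B y‖ := by
      linarith [hB x y, real_inner_le_norm (x - y) (B x - B y)]
    exact le_of_mul_le_mul_right h' h

theorem mul_inner_le (hB : IsCocoercive γ B) (hγ : 0 ≤ γ) (x y : H) :
    γ * ⟪x - y, B x - B y⟫ ≤ ‖x - y‖ ^ 2 :=
  calc γ * ⟪x - y, B x - B y⟫ ≤ ‖x - y‖ * (γ * ‖B x - B y‖) := by
        nlinarith [real_inner_le_norm (x - y) (B x - B y)]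
    _ ≤ ‖x - y‖ ^ 2 := by
        nlinarith [hB.mul_norm_sub_le x y, norm_nonneg (x - y)]

theorem add_smul_id (hB : IsCocoercive γ B) (hγ : 0 < γ) (hσ : 0 ≤ σ) :
    IsCocoercive (γ⁻¹ + σ)⁻¹ (fun x => B x + σ • x) := by
  intro x y
  set a := B x - B y
  set d := x - y
  have hlower : γ * ‖a‖ ^ 2 ≤ ⟪d, a⟫ := hB x y
  have hupper : γ * ⟪d, a⟫ ≤ ‖d‖ ^ 2 := hB.mul_inner_le hγ.le x y
  have hdiff : B x + σ • x - (B y + σ • y) = a + σ • d := by module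
  have hnorm : ‖a + σ • d‖ ^ 2 = ‖a‖ ^ 2 + 2 * σ * ⟪d, a⟫ + σ ^ 2 * ‖d‖ ^ 2 := by
    rw [norm_add_sq_real, real_inner_smul_right, norm_smul, Real.norm_of_nonneg hσ,
      real_inner_comm]
    ring
  have hinner : ⟪d, a + σ • d⟫ = ⟪d, a⟫ + σ * ‖d‖ ^ 2 := by
    rw [inner_add_right, real_inner_smul_right, real_inner_self_eq_norm_sq]
  have hconst : (γ⁻¹ + σ)⁻¹ = γ / (1 + σ * γ) := by
    field_simp
  rw [hdiff, hnorm, hinner, hconst, div_mul_eq_mul_div, div_le_iff₀ (by positivity)]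
  nlinarith [mul_le_mul_of_nonneg_left hupper hσ]

end IsCocoercive

theorem isCocoercive_comp_smul_add_iff {β θ : ℝ} {B : H → H} (hθ : 0 < θ) (q : H) :
    IsCocoercive β B ↔ IsCocoercive (β / θ) (fun x => B (θ • x + q)) := by
  refine ⟨fun hB => hB.comp_smul_add hθ q, fun hB => ?_⟩
  have h := hB.comp_smul_add (inv_pos.2 hθ) (-(θ⁻¹ • q))
  have hsubst : ∀ x : H, θ • (θ⁻¹ • x + -(θ⁻¹ • q)) + q = x := fun x => by
    rw [smul_add, smul_neg, smul_inv_smul₀ hθ.ne', smul_inv_smul₀ hθ.ne', neg_add_cancel_right]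
  rw [div_inv_eq_mul, div_mul_cancel₀ β hθ.ne'] at h
  simpa only [hsubst] using h

end

theorem strengthening_cocoercive_general {H : Type*} [NormedAddCommGroup H] [InnerProductSpace ℝ H]
    (B : H → H) (q : H) (θ σ β : ℝ) (hθ : 0 < θ) (hσ : 0 < σ) (hβ : 0 < β) :
    ((∀ x y : H, β * ‖B x - B y‖ ^ 2 ≤ ⟪x - y, B x - B y⟫) ↔
        ∀ x y : H, (β / θ) * ‖B (θ • x + q) - B (θ • y + q)‖ ^ 2 ≤
          ⟪x - y, B (θ • x + q) - B (θ • y + q)⟫) ∧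
      ((∀ x y : H, β * ‖B x - B y‖ ^ 2 ≤ ⟪x - y, B x - B y⟫) →
        ∀ x y : H,
          (θ / β + σ)⁻¹ * ‖(B (θ • x + q) + σ • x) - (B (θ • y + q) + σ • y)‖ ^ 2 ≤
            ⟪x - y, (B (θ • x + q) + σ • x) - (B (θ • y + q) + σ • y)⟫) := by
  refine ⟨isCocoercive_comp_smul_add_iff hθ q, fun hB => ?_⟩
  have h := ((show IsCocoercive β B from hB).comp_smul_add hθ q).add_smul_id
    (div_pos hβ hθ) hσ.le
  rwa [inv_div] at h

/-- Cocoercivity of strengthenings: `B` is `β`-cocoercive iff `x ↦ B(θx + q)` is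
`(β/θ)`-cocoercive; and if `B` is `β`-cocoercive and `σ > 0`, then `x ↦ B(θx + q) + σx` is
`μ`-cocoercive with `μ = (θ/β + σ)⁻¹`. -/
theorem strengthening_cocoercive {H : Type*} [NormedAddCommGroup H] [InnerProductSpace ℝ H]
    [CompleteSpace H]
    (B : H → H) (q : H) (θ σ β : ℝ) (hθ : 0 < θ) (hσ : 0 < σ) (hβ : 0 < β) :
    ((∀ x y : H, β * ‖B x - B y‖ ^ 2 ≤ ⟪x - y, B x - B y⟫) ↔
        ∀ x y : H, (β / θ) * ‖B (θ • x + q) - B (θ • y + q)‖ ^ 2 ≤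
          ⟪x - y, B (θ • x + q) - B (θ • y + q)⟫) ∧
      ((∀ x y : H, β * ‖B x - B y‖ ^ 2 ≤ ⟪x - y, B x - B y⟫) →
        ∀ x y : H,
          (θ / β + σ)⁻¹ * ‖(B (θ • x + q) + σ • x) - (B (θ • y + q) + σ • y)‖ ^ 2 ≤
            ⟪x - y, (B (θ • x + q) + σ • x) - (B (θ • y + q) + σ • y)⟫) :=
  strengthening_cocoercive_general B q θ σ β hθ hσ hβ
end

section
/- Let n ≥ 1, let A₁, …, Aₙ be set-valued operators on H, let σ₁, …, σₙ ∈ ℝ with σ := σ₁ + ⋯ + σₙ > 0, let q ∈ H and let θ > 0. Then for every x ∈ H, the following are equivalent: (a) there exist u₁, …, uₙ with uᵢ ∈ Aᵢ(θx + q) for each i and Σᵢ uᵢ + σx = 0 (i.e. x is a zero of Σᵢ ((Aᵢ)_{−q})^{(θ,σᵢ)}); (b) q − (θx + q) ∈ (θ/σ)•(Σᵢ Aᵢ)(θx + q), i.e. θx + q ∈ J_{(θ/σ)(Σᵢ Aᵢ)}(q). Moreover, if each Aᵢ is αᵢ-monotone and Σᵢ (θαᵢ + σᵢ) > 0, then there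 is at most one x ∈ H satisfying (a). -/
open scoped RealInnerProductSpace Pointwise

/-!
A zero `x` of `Σᵢ ((Aᵢ)_{−q})^{(θ,σᵢ)}` is exactly a point with `-(σ x) ∈ (Σᵢ Aᵢ)(θx + q)`,
which after rescaling by `θ/σ` is the resolvent inclusion. For uniqueness, the
`(θ,σᵢ)`-strengthening of an `αᵢ`-monotone operator is `(θαᵢ + σᵢ)`-monotone, monotonicity
constants add up under sums, and an operator that is `β`-monotone with `β > 0` has at most
one zero.
-/

theorem neg_smul_mem_div_smul_set_iff {𝕜 E : Type*} [Field 𝕜] [AddCommGroup E] [Module 𝕜 E]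
    {S : Set E} {θ σ : 𝕜} (hθ : θ ≠ 0) (hσ : σ ≠ 0) (x : E) :
    -(θ • x) ∈ (θ / σ) • S ↔ -(σ • x) ∈ S := by
  rw [Set.mem_smul_set_iff_inv_smul_mem₀ (div_ne_zero hθ hσ), smul_neg, smul_smul,
    inv_div, div_mul_cancel₀ _ hθ]

section MonotoneOperators

variable {H : Type*} [NormedAddCommGroup H] [InnerProductSpace ℝ H]

def sumOp {ι : Type*} [Fintype ι] (A : ι → H → Set H) : H → Set H :=
  fun x => {s | ∃ u : ι → H, (∀ i, u i ∈ A i x) ∧ s = ∑ i, u i}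

/-- The `(θ,σ)`-strengthening `(A_{−q})^{(θ,σ)}` of the inner perturbation `A_{−q}`. -/
def strengthening (A : H → Set H) (θ σ : ℝ) (q : H) : H → Set H :=
  fun x => (· + σ • x) '' A (θ • x + q)

theorem zero_mem_sumOp_strengthening_iff {ι : Type*} [Fintype ι] (A : ι → H → Set H)
    (θ : ℝ) (σ : ι → ℝ) (q x : H) :
    (0 : H) ∈ sumOp (fun i => strengthening (A i) θ (σ i) q) x ↔
      ∃ u : ι → H, (∀ i, u i ∈ A i (θ • x + q)) ∧ (∑ i, u i) + (∑ i, σ i) • x = 0 := by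
  simp only [sumOp, strengthening, Set.mem_ofPred_eq, Set.mem_image, Finset.sum_smul]
  constructor
  · rintro ⟨v, hv, hsum⟩
    choose u hu hv using hv
    refine ⟨u, hu, ?_⟩
    simp only [← Finset.sum_add_distrib, hv, hsum]
  · rintro ⟨u, hu, hsum⟩
    refine ⟨fun i => u i + σ i • x, fun i => ⟨u i, hu i, rfl⟩, ?_⟩
    rw [Finset.sum_add_distrib, hsum]

theorem IsMonotoneOp.strengthening {α θ σ : ℝ} {A : H → Set H} (hA : IsMonotoneOp α A)
    (hθ : 0 < θ) (q : H) : IsMonotoneOp (θ * α + σ) (strengthening A θ σ q) := by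
  rintro x y _ _ ⟨a, ha, rfl⟩ ⟨b, hb, rfl⟩
  have hab := hA _ _ a b ha hb
  rw [add_sub_add_right_eq_sub, ← smul_sub, norm_smul, Real.norm_of_nonneg hθ.le, mul_pow,
    real_inner_smul_left] at hab
  have hab' : θ * α * ‖x - y‖ ^ 2 ≤ ⟪x - y, a - b⟫ := le_of_mul_le_mul_left (by linarith) hθ
  calc (θ * α + σ) * ‖x - y‖ ^ 2
      = θ * α * ‖x - y‖ ^ 2 + ⟪x - y, σ • (x - y)⟫ := by
        rw [real_inner_smul_right, real_inner_self_eq_norm_sq]; ring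
    _ ≤ ⟪x - y, a - b⟫ + ⟪x - y, σ • (x - y)⟫ := by gcongr
    _ = ⟪x - y, a + σ • x - (b + σ • y)⟫ := by
        rw [← inner_add_right, smul_sub]; congr 1; abel

theorem IsMonotoneOp.sumOp {ι : Type*} [Fintype ι] {α : ι → ℝ} {A : ι → H → Set H}
    (hA : ∀ i, IsMonotoneOp (α i) (A i)) : IsMonotoneOp (∑ i, α i) (sumOp A) := by
  rintro x y _ _ ⟨u, hu, rfl⟩ ⟨v, hv, rfl⟩
  rw [← Finset.sum_sub_distrib, inner_sum, Finset.sum_mul]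
  exact Finset.sum_le_sum fun i _ => hA i x y _ _ (hu i) (hv i)

theorem IsMonotoneOp.eq_of_zero_mem {α : ℝ} {A : H → Set H} (hA : IsMonotoneOp α A)
    (hα : 0 < α) {x y : H} (hx : (0 : H) ∈ A x) (hy : (0 : H) ∈ A y) : x = y := by
  have h := hA x y 0 0 hx hy
  rw [sub_zero, inner_zero_right] at h
  have : ‖x - y‖ ^ 2 ≤ 0 := nonpos_of_mul_nonpos_right h hα
  rwa [sq_nonpos_iff, norm_eq_zero, sub_eq_zero] at this

end MonotoneOperators

theorem zero_of_strengthenings_general {H : Type*} [NormedAddCommGroup H] [InnerProductSpace ℝ H]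
    (n : ℕ) (A : Fin n → (H → Set H)) (σ : Fin n → ℝ)
    (hσ : 0 < ∑ i, σ i) (q : H) (θ : ℝ) (hθ : 0 < θ) :
    (∀ x : H,
        (∃ u : Fin n → H, (∀ i, u i ∈ A i (θ • x + q)) ∧ (∑ i, u i) + (∑ i, σ i) • x = 0) ↔
          q - (θ • x + q) ∈
            (θ / ∑ i, σ i) •
              {s : H | ∃ u : Fin n → H, (∀ i, u i ∈ A i (θ • x + q)) ∧ s = ∑ i, u i}) ∧
      (∀ α : Fin n → ℝ, (∀ i, IsMonotoneOp (α i) (A i)) → 0 < ∑ i, (θ * α i + σ i) →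
        ∀ x x' : H,
          (∃ u : Fin n → H, (∀ i, u i ∈ A i (θ • x + q)) ∧ (∑ i, u i) + (∑ i, σ i) • x = 0) →
          (∃ u : Fin n → H, (∀ i, u i ∈ A i (θ • x' + q)) ∧ (∑ i, u i) + (∑ i, σ i) • x' = 0) →
          x = x') := by
  refine ⟨fun x => ?_, fun α hα hpos x x' hx hx' => ?_⟩
  · rw [sub_add_cancel_right, neg_smul_mem_div_smul_set_iff hθ.ne' hσ.ne']
    exact exists_congr fun u => and_congr_right fun _ => by
      rw [← eq_neg_iff_add_eq_zero, eq_comm]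
  · rw [← zero_mem_sumOp_strengthening_iff] at hx hx'
    exact (IsMonotoneOp.sumOp fun i => (hα i).strengthening hθ q).eq_of_zero_mem hpos hx hx'

/-- Zeros of sums of strengthenings: `x` is a zero of `Σᵢ ((Aᵢ)_{−q})^{(θ,σᵢ)}` iff
`θx + q ∈ J_{(θ/σ)(Σᵢ Aᵢ)}(q)`; moreover such a zero is unique when each `Aᵢ` is
`αᵢ`-monotone and `Σᵢ (θαᵢ + σᵢ) > 0`. -/
theorem zero_of_strengthenings {H : Type*} [NormedAddCommGroup H] [InnerProductSpace ℝ H]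
    [CompleteSpace H]
    (n : ℕ) (hn : 1 ≤ n) (A : Fin n → (H → Set H)) (σ : Fin n → ℝ)
    (hσ : 0 < ∑ i, σ i) (q : H) (θ : ℝ) (hθ : 0 < θ) :
    (∀ x : H,
        (∃ u : Fin n → H, (∀ i, u i ∈ A i (θ • x + q)) ∧ (∑ i, u i) + (∑ i, σ i) • x = 0) ↔
          q - (θ • x + q) ∈
            (θ / ∑ i, σ i) •
              {s : H | ∃ u : Fin n → H, (∀ i, u i ∈ A i (θ • x + q)) ∧ s = ∑ i, u i}) ∧
      (∀ α : Fin n → ℝ, (∀ i, IsMonotoneOp (α i) (A i)) → 0 < ∑ i, (θ * α i + σ i) →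
        ∀ x x' : H,
          (∃ u : Fin n → H, (∀ i, u i ∈ A i (θ • x + q)) ∧ (∑ i, u i) + (∑ i, σ i) • x = 0) →
          (∃ u : Fin n → H, (∀ i, u i ∈ A i (θ • x' + q)) ∧ (∑ i, u i) + (∑ i, σ i) • x' = 0) →
          x = x') :=
  zero_of_strengthenings_general n A σ hσ q θ hθ
end

section
/- Let C₁, …, Cₙ ⊆ H be nonempty closed convex sets with C := C₁ ∩ ⋯ ∩ Cₙ ≠ ∅, let q ∈ H, and let p := P_C(q) be the nearest-point projection of q onto C. Then there exists x ∈ H with q − x ∈ (Σᵢ N_{Cᵢ})(x) if and only if q − p ∈ (Σᵢ N_{Cᵢ})(p). Moreover, in this case, for any θ > 0 and any σ₁, …, σₙ ∈ ℝ with Σᵢ σᵢ > 0, the point (1/θ)(p − q) is the unique x ∈ H for which there exist uᵢ ∈ N_{Cᵢ}(θx + q) with Σᵢ uᵢ + (Σᵢ σᵢ)x = 0. -/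
/-!
A sum of normal vectors `Σᵢ uᵢ` with `uᵢ ∈ N_{Cᵢ}(x)` is normal to `C = ⋂ᵢ Cᵢ` at `x`, and
`q - x ∈ N_C(x)` characterizes `x = P_C(q)`; so the only possible `x` is `p`. For the second part
put `y = θ • x + q`: the equation `Σᵢ uᵢ + (Σᵢ σᵢ) • x = 0` says that
`-(Σᵢ σᵢ) • x = (Σᵢ σᵢ / θ) • (q - y)` lies in the cone `(Σᵢ N_{Cᵢ})(y)`, a positive rescaling of
`q - y ∈ (Σᵢ N_{Cᵢ})(y)`, which holds exactly when `y = p`.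
-/

open scoped RealInnerProductSpace Pointwise

/-- The normal cone to a set `C` at `x`: nonempty exactly when `x ∈ C`, in which case it
consists of all `u` with `⟪u, c − x⟫ ≤ 0` for every `c ∈ C`. -/
def normalCone {H : Type*} [NormedAddCommGroup H] [InnerProductSpace ℝ H]
    (C : Set H) (x : H) : Set H :=
  {u : H | x ∈ C ∧ ∀ c ∈ C, ⟪u, c - x⟫ ≤ 0}

section NormalCone

variable {H : Type*} [NormedAddCommGroup H] [InnerProductSpace ℝ H]

lemma smul_mem_normalCone {C : Set H} {x u : H} {c : ℝ} (hc : 0 ≤ c)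
    (hu : u ∈ normalCone C x) : c • u ∈ normalCone C x := by
  refine ⟨hu.1, fun y hy => ?_⟩
  rw [real_inner_smul_left]
  exact mul_nonpos_of_nonneg_of_nonpos hc (hu.2 y hy)

lemma eq_of_sub_mem_normalCone {S : Set H} {q p x : H}
    (hp : p ∈ S ∧ ∀ c ∈ S, ‖q - p‖ ≤ ‖q - c‖) (hx : q - x ∈ normalCone S x) : x = p := by
  have hinner : ⟪q - x, p - x⟫ ≤ 0 := hx.2 p hp.1
  have hnear : ‖q - p‖ ≤ ‖q - x‖ := hp.2 x hx.1
  have hexpand : ‖q - p‖ ^ 2 = ‖q - x‖ ^ 2 - 2 * ⟪q - x, p - x⟫ + ‖p - x‖ ^ 2 := by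
    rw [← norm_sub_sq_real, sub_sub_sub_cancel_right]
  have : ‖p - x‖ = 0 := by
    nlinarith [norm_nonneg (q - p), norm_nonneg (p - x)]
  exact (sub_eq_zero.mp (norm_eq_zero.mp this)).symm

variable {ι : Type*} [Fintype ι]

/-- The value `(Σᵢ N_{Cᵢ})(x)` of the sum of the normal cone operators. -/
def sumNormalCone (C : ι → Set H) (x : H) : Set H :=
  {w | ∃ u : ι → H, (∀ i, u i ∈ normalCone (C i) x) ∧ w = ∑ i, u i}

lemma smul_mem_sumNormalCone_iff {C : ι → Set H} {x w : H} {c : ℝ} (hc : 0 < c) :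
    c • w ∈ sumNormalCone C x ↔ w ∈ sumNormalCone C x := by
  have scale : ∀ {a : ℝ} {v : H}, 0 ≤ a → v ∈ sumNormalCone C x → a • v ∈ sumNormalCone C x :=
    fun ha ⟨u, hu, hv⟩ =>
      ⟨fun i => _ • u i, fun i => smul_mem_normalCone ha (hu i), by rw [hv, Finset.smul_sum]⟩
  refine ⟨fun h => ?_, scale hc.le⟩
  simpa [smul_smul, inv_mul_cancel₀ hc.ne'] using scale (inv_nonneg.mpr hc.le) h

lemma sumNormalCone_subset_normalCone_iInter (C : ι → Set H) (x : H) :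
    sumNormalCone C x ⊆ normalCone (⋂ i, C i) x := by
  rintro _ ⟨u, hu, rfl⟩
  refine ⟨Set.mem_iInter.mpr fun i => (hu i).1, fun c hc => ?_⟩
  rw [sum_inner]
  exact Finset.sum_nonpos fun i _ => (hu i).2 c (Set.mem_iInter.mp hc i)

end NormalCone

theorem zero_of_strengthenings_normal_cones_general {H : Type*} [NormedAddCommGroup H]
    [InnerProductSpace ℝ H]
    (n : ℕ) (C : Fin n → Set H)
    (q p : H)
    (hp : p ∈ ⋂ i, C i ∧ ∀ c ∈ ⋂ i, C i, ‖q - p‖ ≤ ‖q - c‖) :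
    ((∃ x : H, ∃ u : Fin n → H, (∀ i, u i ∈ normalCone (C i) x) ∧ q - x = ∑ i, u i) ↔
        ∃ u : Fin n → H, (∀ i, u i ∈ normalCone (C i) p) ∧ q - p = ∑ i, u i) ∧
      ((∃ u : Fin n → H, (∀ i, u i ∈ normalCone (C i) p) ∧ q - p = ∑ i, u i) →
        ∀ θ : ℝ, 0 < θ → ∀ σ : Fin n → ℝ, 0 < ∑ i, σ i →
          ∀ x : H,
            (∃ u : Fin n → H,
                (∀ i, u i ∈ normalCone (C i) (θ • x + q)) ∧ (∑ i, u i) + (∑ i, σ i) • x = 0) ↔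
              x = (1 / θ) • (p - q)) := by
  have eq_p : ∀ y, q - y ∈ sumNormalCone C y → y = p := fun y hy =>
    eq_of_sub_mem_normalCone hp (sumNormalCone_subset_normalCone_iInter C y hy)
  refine ⟨⟨fun ⟨x, hx⟩ => eq_p x hx ▸ hx, fun hp' => ⟨p, hp'⟩⟩, fun hp' θ hθ σ hσ x => ?_⟩
  have hrescale : -((∑ i, σ i) • x) = ((∑ i, σ i) / θ) • (q - (θ • x + q)) := by
    rw [sub_add_cancel_right, smul_neg, smul_smul, div_mul_cancel₀ _ hθ.ne']
  calc (∃ u : Fin n → H, (∀ i, u i ∈ normalCone (C i) (θ • x + q)) ∧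
          (∑ i, u i) + (∑ i, σ i) • x = 0)
      ↔ -((∑ i, σ i) • x) ∈ sumNormalCone C (θ • x + q) :=
        exists_congr fun u => and_congr_right' (add_eq_zero_iff_eq_neg.trans eq_comm)
    _ ↔ q - (θ • x + q) ∈ sumNormalCone C (θ • x + q) := by
        rw [hrescale, smul_mem_sumNormalCone_iff (div_pos hσ hθ)]
    _ ↔ θ • x + q = p := ⟨eq_p _, fun h => h ▸ hp'⟩
    _ ↔ x = (1 / θ) • (p - q) := by
        rw [← eq_sub_iff_add_eq, one_div, eq_inv_smul_iff₀ hθ.ne']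

/-- Best approximation via strengthenings: with `p = P_{∩ᵢ Cᵢ}(q)`, the point `q` satisfies
`q − x ∈ (Σᵢ N_{Cᵢ})(x)` for some `x` iff `q − p ∈ (Σᵢ N_{Cᵢ})(p)`, in which case, for any
`θ > 0` and `σᵢ` with `Σᵢ σᵢ > 0`, `(1/θ)(p − q)` is the unique zero of
`Σᵢ ((N_{Cᵢ})_{−q})^{(θ,σᵢ)}`. -/
theorem zero_of_strengthenings_normal_cones {H : Type*} [NormedAddCommGroup H]
    [InnerProductSpace ℝ H] [CompleteSpace H]
    (n : ℕ) (C : Fin n → Set H)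
    (hC : ∀ i, (C i).Nonempty ∧ IsClosed (C i) ∧ Convex ℝ (C i))
    (hInt : (⋂ i, C i).Nonempty) (q p : H)
    (hp : p ∈ ⋂ i, C i ∧ ∀ c ∈ ⋂ i, C i, ‖q - p‖ ≤ ‖q - c‖) :
    ((∃ x : H, ∃ u : Fin n → H, (∀ i, u i ∈ normalCone (C i) x) ∧ q - x = ∑ i, u i) ↔
        ∃ u : Fin n → H, (∀ i, u i ∈ normalCone (C i) p) ∧ q - p = ∑ i, u i) ∧
      ((∃ u : Fin n → H, (∀ i, u i ∈ normalCone (C i) p) ∧ q - p = ∑ i, u i) →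
        ∀ θ : ℝ, 0 < θ → ∀ σ : Fin n → ℝ, 0 < ∑ i, σ i →
          ∀ x : H,
            (∃ u : Fin n → H,
                (∀ i, u i ∈ normalCone (C i) (θ • x + q)) ∧ (∑ i, u i) + (∑ i, σ i) • x = 0) ↔
              x = (1 / θ) • (p - q)) :=
  zero_of_strengthenings_normal_cones_general n C q p hp
end

section
/- Let A be a maximally α_A-monotone set-valued operator on H and let B : H → H be an everywhere-defined single-valued map that is α_B-monotone and continuous. Then the sum A + B (i.e. x ↦ {u + B(x) : u ∈ A(x)}) is maximally (α_A + α_B)-monotone. Consequently, if θ, σ_A, σ_B > 0 satisfy θα_A + σ_A > 0 and θα_B + σ_B > 0, then for every q ∈ H there exists a unique z ∈ H with q − z ∈ (θ/(σ_A+σ_B))•(A+B)(z). -/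
/-!
Minty's theorem (for maximally monotone `A`, every `p` has some `z` with `p - z ∈ A z`) comes from
minimizing the 1-strongly convex function `(x, u) ↦ sup_{v ∈ A y} (‖x + u‖² / 2 - ⟪x - y, u - v⟫)`
(supremum over the graph of `A`) on `H × H`: maximality makes it at least `‖x + u‖² / 2`, and at a
minimizer `(z, w)` the quadratic growth forces `-z ∈ A (-w)` and `z + w = 0`.

After subtracting `α_A • id` and `α_B • id`, maximality of `A + B` reduces to solving
`p ∈ z + A z + B z`. Replacing `B` by its Yosida approximations `B ∘ (id + μ B)⁻¹`, which are
monotone and `1/μ`-Lipschitz, makes the problem solvable by Minty's theorem. Since `B` is bounded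
near a point of the graph of `A`, monotonicity bounds the approximate values of `B` uniformly; the
approximate solutions are then Cauchy as `μ → 0`, and the closed graph of `A` yields a solution.
The resolvent statement is Minty's theorem for the maximally `c (α_A + α_B)`-monotone operator
`c (A + B)`, `c = θ / (σ_A + σ_B)`, because `c (α_A + α_B) > -1`.
-/

open scoped RealInnerProductSpace Pointwise

section

open Filter Topology Set

section addMap

variable {G : Type*} [AddCommGroup G] {A : G → Set G} {B : G → G}

def addMap (A : G → Set G) (B : G → G) : G → Set G := fun x => {w | ∃ u ∈ A x, w = u + B x}

theorem mem_addMap_iff {x w : G} : w ∈ addMap A B x ↔ w - B x ∈ A x :=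
  ⟨by rintro ⟨u, hu, rfl⟩; simpa using hu, fun h => ⟨_, h, (sub_add_cancel w _).symm⟩⟩

theorem addMap_addMap (C : G → G) :
    addMap (addMap A B) C = addMap A fun x => B x + C x := by
  ext x w
  rw [mem_addMap_iff, mem_addMap_iff, mem_addMap_iff, sub_right_comm, sub_sub]

end addMap

variable {H : Type*} [NormedAddCommGroup H]

theorem eq_of_mul_norm_sub_sq_nonpos {c : ℝ} {x y : H} (hc : 0 < c)
    (h : c * ‖x - y‖ ^ 2 ≤ 0) : x = y := by
  rw [← sub_eq_zero, ← norm_eq_zero, ← sq_eq_zero_iff]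
  exact le_antisymm (nonpos_of_mul_nonpos_right h hc) (sq_nonneg _)

variable [InnerProductSpace ℝ H] {A : H → Set H} {B : H → H} {α β : ℝ}

theorem isMonotoneOp_singleton_iff :
    IsMonotoneOp α (fun x => {B x}) ↔ ∀ x y, α * ‖x - y‖ ^ 2 ≤ ⟪x - y, B x - B y⟫ :=
  ⟨fun h x y => h x y _ _ rfl rfl, by rintro h x y _ _ rfl rfl; exact h x y⟩

theorem IsMonotoneOp.addMap (hA : IsMonotoneOp α A) (hB : IsMonotoneOp β fun x => {B x}) :
    IsMonotoneOp (α + β) (addMap A B) := by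
  rintro x y _ _ ⟨u, hu, rfl⟩ ⟨v, hv, rfl⟩
  rw [add_sub_add_comm, inner_add_right, add_mul]
  exact add_le_add (hA x y u v hu hv) (isMonotoneOp_singleton_iff.1 hB x y)

theorem IsMaxMonotoneOp.addMap_smul_add (hA : IsMaxMonotoneOp α A) (β : ℝ) (q : H) :
    IsMaxMonotoneOp (α + β) (addMap A fun x => β • x + q) := by
  have hlin : ∀ x y : H, ⟪x - y, (β • x + q) - (β • y + q)⟫ = β * ‖x - y‖ ^ 2 := fun x y => by
    rw [add_sub_add_right_eq_sub, ← smul_sub, real_inner_smul_right, real_inner_self_eq_norm_sq]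
  refine ⟨hA.1.addMap (isMonotoneOp_singleton_iff.2 fun x y => (hlin x y).ge),
    fun x u h => mem_addMap_iff.2 (hA.2 x _ fun y v hv => ?_)⟩
  have hrel := h y _ ⟨v, hv, rfl⟩
  rw [show u - (β • x + q) - v = u - (v + (β • y + q)) - ((β • x + q) - (β • y + q)) by abel,
    inner_sub_right, hlin]
  linarith

theorem IsMaxMonotoneOp.smul (hA : IsMaxMonotoneOp α A) {c : ℝ} (hc : 0 < c) :
    IsMaxMonotoneOp (c * α) fun x => c • A x := by
  refine ⟨?_, fun x u h => mem_smul_set.2 ⟨c⁻¹ • u, hA.2 x _ fun y v hv => ?_,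
    smul_inv_smul₀ hc.ne' u⟩⟩
  · rintro x y _ _ ⟨u, hu, rfl⟩ ⟨v, hv, rfl⟩
    rw [← smul_sub, real_inner_smul_right, mul_assoc]
    exact mul_le_mul_of_nonneg_left (hA.1 x y u v hu hv) hc.le
  · have hrel := h y (c • v) (smul_mem_smul_set hv)
    rw [show c⁻¹ • u - v = c⁻¹ • (u - c • v) by rw [smul_sub, inv_smul_smul₀ hc.ne'],
      real_inner_smul_right, le_inv_mul_iff₀ hc, ← mul_assoc]
    exact hrel

theorem IsMaxMonotoneOp.exists_mem (hA : IsMaxMonotoneOp α A) : ∃ y v, v ∈ A y := by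
  by_contra! h
  exact h 0 0 (hA.2 0 0 fun y v hv => (h y v hv).elim)

theorem IsMaxMonotoneOp.exists_inner_nonpos (hA : IsMaxMonotoneOp 0 A) (x u : H) :
    ∃ y v, v ∈ A y ∧ ⟪x - y, u - v⟫ ≤ 0 := by
  by_contra! h
  simpa using h x u (hA.2 x u fun y v hv => by simpa using (h y v hv).le)

theorem IsMaxMonotoneOp.mem_of_tendsto {ι : Type*} {l : Filter ι} [l.NeBot]
    (hA : IsMaxMonotoneOp α A) {x u : H} {xs us : ι → H} (hx : Tendsto xs l (𝓝 x))
    (hu : Tendsto us l (𝓝 u)) (hmem : ∀ n, us n ∈ A (xs n)) : u ∈ A x :=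
  hA.2 x u fun y v hv => le_of_tendsto_of_tendsto' (((hx.sub_const y).norm.pow 2).const_mul α)
    ((hx.sub_const y).inner (hu.sub_const v)) fun n => hA.1 _ _ _ _ (hmem n) hv

theorem IsMonotoneOp.mul_norm_sub_le (hA : IsMonotoneOp α A) {p p' z z' : H}
    (hz : p - z ∈ A z) (hz' : p' - z' ∈ A z') : (1 + α) * ‖z - z'‖ ≤ ‖p - p'‖ := by
  have hrel := hA z z' _ _ hz hz'
  rw [show p - z - (p' - z') = (p - p') - (z - z') by abel, inner_sub_right,
    real_inner_self_eq_norm_sq] at hrel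
  rcases (norm_nonneg (z - z')).eq_or_lt with h0 | hpos
  · simp [← h0]
  · refine le_of_mul_le_mul_right ?_ hpos
    nlinarith [real_inner_le_norm (z - z') (p - p')]

theorem IsMonotoneOp.isMaxMonotoneOp_of_forall_exists (hA : IsMonotoneOp α A) (hα : -1 < α)
    (hsurj : ∀ p, ∃ z, p - z ∈ A z) : IsMaxMonotoneOp α A := by
  refine ⟨hA, fun x u h => ?_⟩
  obtain ⟨z, hz⟩ := hsurj (x + u)
  have hrel := h z _ hz
  rw [show u - (x + u - z) = -(x - z) by abel, inner_neg_right, real_inner_self_eq_norm_sq] at hrel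
  obtain rfl : x = z := eq_of_mul_norm_sub_sq_nonpos (c := 1 + α) (by linarith) (by linarith)
  simpa using hz

theorem cauchySeq_of_dist_sq_le {X : Type*} [PseudoMetricSpace X] {f : ℕ → X} {ε : ℕ → ℝ}
    (hε : Tendsto ε atTop (𝓝 0)) (h : ∀ n k, dist (f n) (f k) ^ 2 ≤ ε n + ε k) :
    CauchySeq f := by
  refine Metric.cauchySeq_iff'.2 fun δ hδ => ?_
  obtain ⟨N, hN⟩ := eventually_atTop.1 (hε.eventually (gt_mem_nhds (half_pos (pow_pos hδ 2))))
  refine ⟨N, fun n hn => lt_of_pow_lt_pow_left₀ 2 hδ.le ?_⟩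
  linarith [h n N, hN n hn, hN N le_rfl]

/-- The supremum of the family may be infinite, so it is handled through its upper bounds: `x`
minimizes it, with minimum `m₀` and quadratic growth. -/
theorem exists_sharp_min_sup_of_strongConvexOn {E ι : Type*} [NormedAddCommGroup E]
    [NormedSpace ℝ E] [CompleteSpace E] {F : ι → E → ℝ} {m c C₀ : ℝ} {x₀ : E} (hm : 0 < m)
    (hF : ∀ i, StrongConvexOn univ m (F i)) (hFc : ∀ i, Continuous (F i))
    (hbdd : ∀ x, ∃ i, c ≤ F i x) (hx₀ : ∀ i, F i x₀ ≤ C₀) :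
    ∃ x m₀, (∀ i, F i x ≤ m₀) ∧
      ∀ y C, (∀ i, F i y ≤ C) → m₀ + m / 2 * ‖y - x‖ ^ 2 ≤ C := by
  set S : Set ℝ := {C | ∃ x, ∀ i, F i x ≤ C}
  have hSne : S.Nonempty := ⟨C₀, x₀, hx₀⟩
  have hSbdd : BddBelow S := ⟨c, by
    rintro C ⟨x, hx⟩
    obtain ⟨i, hi⟩ := hbdd x
    exact hi.trans (hx i)⟩
  set m₀ := sInf S
  have hcomb : ∀ x y C D, (∀ i, F i x ≤ C) → (∀ i, F i y ≤ D) → ∀ a b : ℝ, 0 ≤ a → 0 ≤ b →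
      a + b = 1 → m₀ ≤ a * C + b * D - a * b * (m / 2 * ‖x - y‖ ^ 2) :=
    fun x y C D hx hy a b ha hb hab => csInf_le hSbdd ⟨a • x + b • y, fun i =>
      ((hF i).2 trivial trivial ha hb hab).trans (by
        rw [smul_eq_mul, smul_eq_mul]; gcongr; exacts [hx i, hy i])⟩
  have hseq : ∀ n : ℕ, ∃ x, ∀ i, F i x ≤ m₀ + 1 / (n + 1) := fun n => by
    obtain ⟨C, ⟨x, hx⟩, hC⟩ := exists_lt_of_csInf_lt hSne
      (lt_add_of_pos_right m₀ (Nat.one_div_pos_of_nat (n := n)))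
    exact ⟨x, fun i => (hx i).trans hC.le⟩
  choose xs hxs using hseq
  have hcauchy : CauchySeq xs := by
    refine cauchySeq_of_dist_sq_le (ε := fun n => 4 / m * (1 / (n + 1)))
      (by simpa using tendsto_one_div_add_atTop_nhds_zero_nat.const_mul (4 / m)) fun n k => ?_
    have hmid := hcomb _ _ _ _ (hxs n) (hxs k) (1 / 2) (1 / 2) (by norm_num) (by norm_num)
      (by norm_num)
    rw [dist_eq_norm, ← mul_add, div_mul_eq_mul_div, le_div_iff₀ hm]
    linarith
  obtain ⟨x, hx⟩ := cauchySeq_tendsto_of_complete hcauchy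
  have hxm : ∀ i, F i x ≤ m₀ := fun i =>
    le_of_tendsto_of_tendsto' (((hFc i).tendsto x).comp hx)
      (by simpa using tendsto_one_div_add_atTop_nhds_zero_nat.const_add m₀) fun n => hxs n i
  refine ⟨x, m₀, hxm, fun y C hy => ?_⟩
  have hseg : ∀ t ∈ Ioo (0 : ℝ) 1, m₀ + (1 - t) * (m / 2 * ‖y - x‖ ^ 2) ≤ C := by
    rintro t ⟨ht0, ht1⟩
    have h := hcomb x y m₀ C hxm hy (1 - t) t (by linarith) ht0.le (by ring)
    rw [norm_sub_rev] at h
    refine le_of_mul_le_mul_left ?_ ht0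
    linarith
  have hlim : Tendsto (fun t : ℝ => m₀ + (1 - t) * (m / 2 * ‖y - x‖ ^ 2)) (𝓝[>] 0)
      (𝓝 (m₀ + (1 - 0) * (m / 2 * ‖y - x‖ ^ 2))) :=
    ((Continuous.tendsto (by fun_prop) 0)).mono_left nhdsWithin_le_nhds
  simpa using le_of_tendsto hlim (eventually_of_mem (Ioo_mem_nhdsGT one_pos) hseg)

theorem IsMaxMonotoneOp.exists_neg_mem [CompleteSpace H] (hA : IsMaxMonotoneOp 0 A) :
    ∃ z, -z ∈ A z := by
  let F : {p : H × H // p.2 ∈ A p.1} → WithLp 2 (H × H) → ℝ := fun p q =>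
    ‖q‖ ^ 2 / 2 + ⟪WithLp.toLp 2 (p.1.2, p.1.1), q⟫ - ⟪p.1.1, p.1.2⟫
  have hF : ∀ p q, F p q = ‖q.fst + q.snd‖ ^ 2 / 2 - ⟪q.fst - p.1.1, q.snd - p.1.2⟫ := by
    intro p q
    simp only [F, WithLp.prod_norm_sq_eq_of_L2, WithLp.prod_inner_apply, norm_add_sq_real,
      inner_sub_left, inner_sub_right, WithLp.ofLp_fst, WithLp.ofLp_snd]
    rw [real_inner_comm q.fst]
    ring
  have hgraph : ∀ y v, v ∈ A y → ∀ p, F p (WithLp.toLp 2 (y, v)) ≤ ‖y + v‖ ^ 2 / 2 := by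
    intro y v hv p
    rw [hF]
    simpa using hA.1 y _ v _ hv p.2
  have hlow : ∀ q, ∃ p, ‖q.fst + q.snd‖ ^ 2 / 2 ≤ F p q := by
    intro q
    obtain ⟨y, v, hv, hyv⟩ := hA.exists_inner_nonpos q.fst q.snd
    exact ⟨⟨(y, v), hv⟩, by rw [hF]; linarith⟩
  have hconv : ∀ p, StrongConvexOn univ 1 (F p) := fun p => by
    refine strongConvexOn_iff_convex.2 ?_
    refine (((innerSL ℝ (WithLp.toLp 2 (p.1.2, p.1.1))).toLinearMap.convexOn
      convex_univ).add_const (-⟪p.1.1, p.1.2⟫)).congr fun q _ => ?_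
    simp only [F, ContinuousLinearMap.coe_coe, Pi.add_apply, innerSL_apply_apply]
    ring
  obtain ⟨y₀, v₀, hv₀⟩ := hA.exists_mem
  obtain ⟨q, m₀, hqm, hgrowth⟩ := exists_sharp_min_sup_of_strongConvexOn (F := F) one_pos
    hconv (fun p => by fun_prop)
    (fun q => (hlow q).imp fun p hp => (by positivity : (0 : ℝ) ≤ _).trans hp) (hgraph y₀ v₀ hv₀)
  set z := q.fst
  set w := q.snd
  have hm₀ : ‖z + w‖ ^ 2 / 2 ≤ m₀ := by
    obtain ⟨p, hp⟩ := hlow q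
    exact hp.trans (hqm p)
  have hquad : ∀ y v, v ∈ A y → m₀ + (‖y - z‖ ^ 2 + ‖v - w‖ ^ 2) / 2 ≤ ‖y + v‖ ^ 2 / 2 := by
    intro y v hv
    have h := hgrowth _ _ (hgraph y v hv)
    rw [WithLp.prod_norm_sq_eq_of_L2] at h
    simpa [z, w, div_eq_inv_mul] using h
  have hmem : -z ∈ A (-w) := by
    refine hA.2 _ _ fun y v hv => ?_
    have hyv := hquad y v hv
    have hinner : ⟪-w - y, -z - v⟫ = ⟪z, w⟫ + ⟪v, w⟫ + ⟪y, z⟫ + ⟪y, v⟫ := by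
      simp only [inner_sub_left, inner_sub_right, inner_neg_left, inner_neg_right]
      rw [real_inner_comm z w, real_inner_comm v w, real_inner_comm z y]
      ring
    rw [zero_mul, hinner]
    nlinarith [norm_add_sq_real y v, norm_sub_sq_real y z, norm_sub_sq_real v w,
      norm_add_sq_real z w, sq_nonneg ‖z + w‖]
  have hzw := hquad _ _ hmem
  rw [show -w + -z = -(z + w) by abel, show -w - z = -(z + w) by abel,
    show -z - w = -(z + w) by abel, norm_neg] at hzw
  have hz : z = -w := eq_of_mul_norm_sub_sq_nonpos (c := 1) one_pos (by
    rw [sub_neg_eq_add]; linarith)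
  rw [hz] at hmem
  exact ⟨-w, hmem⟩

theorem IsMaxMonotoneOp.existsUnique_sub_mem [CompleteSpace H] (hA : IsMaxMonotoneOp α A)
    (hα : -1 < α) (p : H) : ∃! z, p - z ∈ A z := by
  have hα' : 0 < 1 + α := by linarith
  have hA₀ : IsMaxMonotoneOp 0 fun x => (1 + α)⁻¹ • addMap A (fun x => (-α) • x + -p) x := by
    simpa using (hA.addMap_smul_add (-α) (-p)).smul (inv_pos.2 hα')
  obtain ⟨z, hz⟩ := hA₀.exists_neg_mem
  obtain ⟨_, ⟨v, hv, rfl⟩, hvz⟩ := mem_smul_set.1 hz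
  rw [inv_smul_eq_iff₀ hα'.ne'] at hvz
  have hpz : p - z ∈ A z := by
    convert hv using 1
    linear_combination (norm := module) -hvz
  refine ⟨z, hpz, fun z' hz' => ?_⟩
  have h := hA.1.mul_norm_sub_le hz' hpz
  rw [sub_self, norm_zero] at h
  exact sub_eq_zero.1 (norm_le_zero_iff.1 (nonpos_of_mul_nonpos_right h hα'))

theorem IsMonotoneOp.isMaxMonotoneOp_of_continuous (hB : IsMonotoneOp α fun x => {B x})
    (hBc : Continuous B) : IsMaxMonotoneOp α fun x => {B x} := by
  refine ⟨hB, fun x u h => ?_⟩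
  have hdir : ∀ e, 0 ≤ ⟪e, u - B x⟫ := by
    intro e
    have ht : ∀ t ∈ Ioi (0 : ℝ), α * t * ‖e‖ ^ 2 ≤ ⟪e, u - B (x - t • e)⟫ := by
      intro t ht
      have hrel := h (x - t • e) _ rfl
      rw [sub_sub_cancel, norm_smul, real_inner_smul_left, Real.norm_of_nonneg (le_of_lt ht)]
        at hrel
      refine le_of_mul_le_mul_left ?_ ht
      linarith
    have hlim₁ : Tendsto (fun t : ℝ => α * t * ‖e‖ ^ 2) (𝓝[>] 0) (𝓝 (α * 0 * ‖e‖ ^ 2)) :=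
      ((Continuous.tendsto (by fun_prop) 0)).mono_left nhdsWithin_le_nhds
    have hlim₂ : Tendsto (fun t : ℝ => ⟪e, u - B (x - t • e)⟫) (𝓝[>] 0)
        (𝓝 ⟪e, u - B (x - (0 : ℝ) • e)⟫) :=
      ((Continuous.tendsto (by fun_prop) 0)).mono_left nhdsWithin_le_nhds
    simpa using le_of_tendsto_of_tendsto hlim₁ hlim₂ (eventually_mem_nhdsWithin.mono ht)
  have hself := hdir (B x - u)
  rw [← neg_sub, inner_neg_left, real_inner_self_eq_norm_sq, neg_nonneg] at hself
  exact mem_singleton_iff.2 (eq_of_mul_norm_sub_sq_nonpos (c := 1) one_pos (by linarith))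

section Resolvent

variable {J : H → H} {μ : ℝ}

theorem IsMonotoneOp.exists_resolvent [CompleteSpace H] (hB : IsMonotoneOp 0 fun x => {B x})
    (hBc : Continuous B) (hμ : 0 < μ) : ∃ J : H → H, ∀ w, J w + μ • B (J w) = w := by
  have hJ := ((hB.isMaxMonotoneOp_of_continuous hBc).smul hμ).existsUnique_sub_mem (by simp)
  choose J hJ using fun w => (hJ w).exists
  refine ⟨J, fun w => ?_⟩
  have h := hJ w
  rw [smul_set_singleton, mem_singleton_iff] at h
  rw [← h, add_sub_cancel]

theorem sub_eq_resolvent_sub (hJ : ∀ w, J w + μ • B (J w) = w) (a b : H) :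
    a - b = (J a - J b) + μ • (B (J a) - B (J b)) := by
  conv_lhs => rw [← hJ a, ← hJ b]
  module

theorem IsMonotoneOp.comp_resolvent (hB : IsMonotoneOp 0 fun x => {B x}) (hμ : 0 ≤ μ)
    (hJ : ∀ w, J w + μ • B (J w) = w) : IsMonotoneOp 0 fun x => {B (J x)} := by
  refine isMonotoneOp_singleton_iff.2 fun a b => ?_
  rw [sub_eq_resolvent_sub hJ, inner_add_left, real_inner_smul_left, real_inner_self_eq_norm_sq]
  have hmono := isMonotoneOp_singleton_iff.1 hB (J a) (J b)
  rw [zero_mul] at hmono ⊢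
  positivity

theorem IsMonotoneOp.mul_norm_comp_resolvent_sub_le (hB : IsMonotoneOp 0 fun x => {B x})
    (hμ : 0 ≤ μ) (hJ : ∀ w, J w + μ • B (J w) = w) (a b : H) :
    μ * ‖B (J a) - B (J b)‖ ≤ ‖a - b‖ := by
  have hmono := isMonotoneOp_singleton_iff.1 hB (J a) (J b)
  rw [zero_mul] at hmono
  have hsq : (μ * ‖B (J a) - B (J b)‖) ^ 2 ≤ ‖a - b‖ ^ 2 := by
    rw [sub_eq_resolvent_sub hJ a b, norm_add_sq_real, norm_smul, real_inner_smul_right,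
      Real.norm_of_nonneg hμ]
    nlinarith [sq_nonneg ‖J a - J b‖, mul_nonneg hμ hmono]
  exact (pow_le_pow_iff_left₀ (by positivity) (norm_nonneg _) two_ne_zero).1 hsq

theorem IsMonotoneOp.norm_comp_resolvent_le (hB : IsMonotoneOp 0 fun x => {B x})
    (hμ : 0 < μ) (hJ : ∀ w, J w + μ • B (J w) = w) (w : H) : ‖B (J w)‖ ≤ ‖B w‖ := by
  have hmono := isMonotoneOp_singleton_iff.1 hB w (J w)
  rw [sub_eq_of_eq_add' (hJ w).symm, real_inner_smul_left, zero_mul, inner_sub_right,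
    real_inner_self_eq_norm_sq] at hmono
  have h : ‖B (J w)‖ * ‖B (J w)‖ ≤ ‖B (J w)‖ * ‖B w‖ := by
    nlinarith [nonneg_of_mul_nonneg_right hmono hμ, real_inner_le_norm (B (J w)) (B w)]
  rcases (norm_nonneg (B (J w))).eq_or_lt with h0 | hpos
  · exact h0 ▸ norm_nonneg _
  · exact le_of_mul_le_mul_left h hpos

end Resolvent

theorem IsMaxMonotoneOp.addMap_of_lipschitz [CompleteSpace H] {C : H → H} {μ : ℝ}
    (hA : IsMaxMonotoneOp 0 A) (hC : IsMonotoneOp 0 fun x => {C x}) (hμ : 0 < μ)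
    (hCμ : ∀ a b, μ * ‖C a - C b‖ ≤ ‖a - b‖) : IsMaxMonotoneOp 0 (addMap A C) := by
  refine ⟨by simpa using hA.1.addMap hC, fun x u h => ?_⟩
  have hμ₂ : 0 < μ / 2 := half_pos hμ
  obtain ⟨z, hz⟩ :=
    ((hA.smul hμ₂).existsUnique_sub_mem (by simp) (x + (μ / 2) • (u - C x))).exists
  obtain ⟨v, hv, hvz⟩ := mem_smul_set.1 hz
  have hrel := h z _ ⟨v, hv, rfl⟩
  rw [zero_mul] at hrel
  have hkey : (μ / 2) • (u - (v + C z)) = -(x - z) + (μ / 2) • (C x - C z) := by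
    linear_combination (norm := module) -hvz
  have hbound : ‖x - z‖ ^ 2 ≤ (μ / 2) * ‖x - z‖ * ‖C x - C z‖ := by
    have := mul_nonneg hμ₂.le hrel
    rw [← real_inner_smul_right, hkey, inner_add_right, inner_neg_right,
      real_inner_self_eq_norm_sq, real_inner_smul_right] at this
    nlinarith [real_inner_le_norm (x - z) (C x - C z)]
  obtain rfl : x = z := eq_of_mul_norm_sub_sq_nonpos (c := 1 / 2) (by norm_num)
    (by nlinarith [hCμ x z, norm_nonneg (x - z)])
  refine mem_addMap_iff.2 ?_
  convert hv using 1
  refine smul_right_injective H hμ₂.ne' ?_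
  dsimp only
  linear_combination (norm := module) -hvz

theorem IsMonotoneOp.mul_norm_le_inner_add {T : H → H} {y₀ : H} {r M : ℝ}
    (hT : IsMonotoneOp 0 fun x => {T x}) (hr : 0 ≤ r) (hM : ∀ w, ‖w - y₀‖ ≤ r → ‖T w‖ ≤ M)
    (z : H) : r * ‖T z‖ ≤ ⟪z - y₀, T z⟫ + (‖z - y₀‖ + r) * M := by
  have hM₀ : 0 ≤ M := (norm_nonneg _).trans (hM y₀ (by simpa using hr))
  rcases eq_or_ne (T z) 0 with h0 | hne
  · simp only [h0, norm_zero, mul_zero, inner_zero_right, zero_add]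
    positivity
  -- test monotonicity against the point at distance `r` from `y₀` in the direction of `T z`
  set e := y₀ + (r / ‖T z‖) • T z
  have hpos : 0 < ‖T z‖ := norm_pos_iff.2 hne
  have he : ‖e - y₀‖ = r := by
    rw [add_sub_cancel_left, norm_smul, Real.norm_of_nonneg (by positivity),
      div_mul_cancel₀ _ hpos.ne']
  have hmono := isMonotoneOp_singleton_iff.1 hT z e
  have hze : ‖z - e‖ ≤ ‖z - y₀‖ + r := by
    rw [← he, norm_sub_rev e]
    exact norm_sub_le_norm_sub_add_norm_sub z y₀ e
  have hcs : -(‖z - e‖ * M) ≤ ⟪z - e, T e⟫ :=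
    (neg_le_neg (mul_le_mul_of_nonneg_left (hM e he.le) (norm_nonneg _))).trans
      (neg_le_of_abs_le (abs_real_inner_le_norm _ _))
  have hsplit : ⟪z - e, T z⟫ = ⟪z - y₀, T z⟫ - r * ‖T z‖ := by
    rw [show z - e = (z - y₀) - (r / ‖T z‖) • T z from (sub_sub _ _ _).symm, inner_sub_left,
      real_inner_smul_left, real_inner_self_eq_norm_sq, sq, ← mul_assoc,
      div_mul_cancel₀ _ hpos.ne']
  rw [zero_mul, inner_sub_right, hsplit] at hmono
  nlinarith [mul_le_mul_of_nonneg_right hze hM₀]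

theorem IsMonotoneOp.mul_norm_le_of_sub_sub_mem {T : H → H} {p y₀ v₀ z : H} {r M : ℝ}
    (hA : IsMonotoneOp 0 A) (hv₀ : v₀ ∈ A y₀) (hT : IsMonotoneOp 0 fun x => {T x})
    (hr : 0 ≤ r) (hM : ∀ w, ‖w - y₀‖ ≤ r → ‖T w‖ ≤ M) (hz : p - z - T z ∈ A z) :
    r * ‖T z‖ ≤ (‖p - y₀ - v₀‖ + M) * (‖p - y₀ - v₀‖ + M + r) := by
  have hTy₀ : ‖T y₀‖ ≤ M := hM y₀ (by simpa using hr)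
  have hdist : ‖z - y₀‖ ≤ ‖p - y₀ - v₀‖ + M := by
    have h := (hA.addMap hT).mul_norm_sub_le (p' := y₀ + v₀ + T y₀) (z' := y₀)
      (mem_addMap_iff.2 hz)
      (mem_addMap_iff.2 (by convert hv₀ using 1; abel))
    rw [add_zero, add_zero, one_mul, show p - (y₀ + v₀ + T y₀) = (p - y₀ - v₀) - T y₀ by abel]
      at h
    linarith [norm_sub_le (p - y₀ - v₀) (T y₀)]
  have hinner : ⟪z - y₀, T z⟫ ≤ ‖z - y₀‖ * ‖p - y₀ - v₀‖ := by
    have hrel := hA z y₀ _ _ hz hv₀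
    rw [zero_mul, show p - z - T z - v₀ = (p - y₀ - v₀) - (z - y₀) - T z by abel,
      inner_sub_right, inner_sub_right, real_inner_self_eq_norm_sq] at hrel
    nlinarith [real_inner_le_norm (z - y₀) (p - y₀ - v₀), sq_nonneg ‖z - y₀‖]
  have hloc := hT.mul_norm_le_inner_add hr hM z
  have hM₀ : 0 ≤ M := (norm_nonneg _).trans hTy₀
  nlinarith [mul_le_mul_of_nonneg_right hdist hM₀,
    mul_le_mul_of_nonneg_right hdist (norm_nonneg (p - y₀ - v₀)),
    mul_nonneg hr (norm_nonneg (p - y₀ - v₀))]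

theorem IsMonotoneOp.norm_sub_sq_le_of_sub_sub_mem (hA : IsMonotoneOp 0 A)
    (hB : IsMonotoneOp 0 fun x => {B x}) {p a₁ a₂ z₁ z₂ : H} {μ₁ μ₂ M : ℝ} (hμ₁ : 0 ≤ μ₁)
    (hμ₂ : 0 ≤ μ₂) (ha₁ : a₁ + μ₁ • B a₁ = z₁) (ha₂ : a₂ + μ₂ • B a₂ = z₂)
    (hz₁ : p - z₁ - B a₁ ∈ A z₁) (hz₂ : p - z₂ - B a₂ ∈ A z₂) (hM₁ : ‖B a₁‖ ≤ M)
    (hM₂ : ‖B a₂‖ ≤ M) : ‖z₁ - z₂‖ ^ 2 ≤ (μ₁ + μ₂) * M ^ 2 := by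
  have hAm := hA _ _ _ _ hz₁ hz₂
  have hBm := isMonotoneOp_singleton_iff.1 hB a₁ a₂
  rw [zero_mul, show p - z₁ - B a₁ - (p - z₂ - B a₂) = -(z₁ - z₂) - (B a₁ - B a₂) by abel,
    inner_sub_right, inner_neg_right, real_inner_self_eq_norm_sq] at hAm
  have hsplit : ⟪z₁ - z₂, B a₁ - B a₂⟫ = ⟪a₁ - a₂, B a₁ - B a₂⟫
      + (μ₁ * ‖B a₁‖ ^ 2 - (μ₁ + μ₂) * ⟪B a₁, B a₂⟫ + μ₂ * ‖B a₂‖ ^ 2) := by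
    rw [← ha₁, ← ha₂, show a₁ + μ₁ • B a₁ - (a₂ + μ₂ • B a₂)
      = (a₁ - a₂) + (μ₁ • B a₁ - μ₂ • B a₂) by abel]
    simp only [inner_add_left, inner_sub_left, inner_sub_right, real_inner_smul_left,
      real_inner_self_eq_norm_sq, real_inner_comm (B a₁) (B a₂)]
    ring
  have hb : ⟪B a₁, B a₂⟫ ≤ M ^ 2 := (real_inner_le_norm _ _).trans (by
    rw [sq]; exact mul_le_mul hM₁ hM₂ (norm_nonneg _) ((norm_nonneg _).trans hM₁))
  nlinarith [mul_le_mul_of_nonneg_left hb (add_nonneg hμ₁ hμ₂), mul_nonneg hμ₁ (sq_nonneg ‖B a₁‖),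
    mul_nonneg hμ₂ (sq_nonneg ‖B a₂‖)]

theorem IsMaxMonotoneOp.exists_sub_mem_addMap [CompleteSpace H] (hA : IsMaxMonotoneOp 0 A)
    (hB : IsMonotoneOp 0 fun x => {B x}) (hBc : Continuous B) (p : H) :
    ∃ z, p - z ∈ addMap A B z := by
  obtain ⟨y₀, v₀, hv₀⟩ := hA.exists_mem
  set μ : ℕ → ℝ := fun n => 1 / (n + 1)
  have hμ : ∀ n, 0 < μ n := fun n => Nat.one_div_pos_of_nat
  have hμ0 : Tendsto μ atTop (𝓝 0) := tendsto_one_div_add_atTop_nhds_zero_nat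
  choose J hJ using fun n => hB.exists_resolvent hBc (hμ n)
  have hS : ∀ n, IsMaxMonotoneOp 0 (addMap A fun x => B (J n x)) := fun n =>
    hA.addMap_of_lipschitz (hB.comp_resolvent (hμ n).le (hJ n)) (hμ n)
      (hB.mul_norm_comp_resolvent_sub_le (hμ n).le (hJ n))
  choose z hz using fun n => ((hS n).existsUnique_sub_mem (by norm_num) p).exists
  simp only [mem_addMap_iff] at hz
  obtain ⟨r, hr, hBr⟩ : ∃ r > 0, ∀ w, ‖w - y₀‖ ≤ r → ‖B w‖ ≤ ‖B y₀‖ + 1 := by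
    obtain ⟨δ, hδ, hδB⟩ := Metric.continuousAt_iff.1 hBc.continuousAt 1 one_pos
    refine ⟨δ / 2, half_pos hδ, fun w hw => ?_⟩
    have := hδB (x := w) (by rw [dist_eq_norm]; linarith)
    rw [dist_eq_norm] at this
    linarith [norm_le_norm_add_norm_sub' (B w) (B y₀)]
  set R := ‖p - y₀ - v₀‖ + (‖B y₀‖ + 1)
  have hbound : ∀ n, ‖B (J n (z n))‖ ≤ R * (R + r) / r := fun n => by
    rw [le_div_iff₀ hr, mul_comm]
    exact hA.1.mul_norm_le_of_sub_sub_mem (T := fun x => B (J n x)) hv₀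
      (hB.comp_resolvent (hμ n).le (hJ n)) hr.le
      (fun w hw => (hB.norm_comp_resolvent_le (hμ n) (hJ n) w).trans (hBr w hw)) (hz n)
  set M := R * (R + r) / r
  have hcauchy : CauchySeq z := by
    refine cauchySeq_of_dist_sq_le (ε := fun n => μ n * M ^ 2)
      (by simpa using hμ0.mul_const (M ^ 2)) fun n k => ?_
    rw [dist_eq_norm, ← add_mul]
    exact hA.1.norm_sub_sq_le_of_sub_sub_mem hB (hμ n).le (hμ k).le (hJ n (z n)) (hJ k (z k))
      (hz n) (hz k) (hbound n) (hbound k)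
  obtain ⟨x, hx⟩ := cauchySeq_tendsto_of_complete hcauchy
  have hJz : Tendsto (fun n => J n (z n)) atTop (𝓝 x) := by
    refine hx.congr_dist (squeeze_zero (fun n => dist_nonneg) (fun n => ?_)
      (by simpa using hμ0.mul_const M))
    rw [dist_eq_norm, sub_eq_of_eq_add' (hJ n (z n)).symm, norm_smul,
      Real.norm_of_nonneg (hμ n).le]
    exact mul_le_mul_of_nonneg_left (hbound n) (hμ n).le
  have hv : Tendsto (fun n => p - z n - B (J n (z n))) atTop (𝓝 (p - x - B x)) :=
    (tendsto_const_nhds.sub hx).sub ((hBc.tendsto x).comp hJz)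
  exact ⟨x, mem_addMap_iff.2 (hA.mem_of_tendsto hx hv hz)⟩

theorem IsMaxMonotoneOp.addMap_of_continuous [CompleteSpace H] (hA : IsMaxMonotoneOp α A)
    (hB : IsMonotoneOp β fun x => {B x}) (hBc : Continuous B) :
    IsMaxMonotoneOp (α + β) (addMap A B) := by
  set B₀ : H → H := fun x => B x + (-β) • x
  have hA₀ : IsMaxMonotoneOp 0 (addMap A fun x => (-α) • x + 0) := by
    simpa using hA.addMap_smul_add (-α) 0
  have hB₀ : IsMonotoneOp 0 fun x => {B₀ x} := isMonotoneOp_singleton_iff.2 fun x y => by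
    have := isMonotoneOp_singleton_iff.1 hB x y
    rw [show B₀ x - B₀ y = (B x - B y) - β • (x - y) by simp only [B₀]; module, inner_sub_right,
      real_inner_smul_right, real_inner_self_eq_norm_sq]
    linarith
  have hS₀ : IsMaxMonotoneOp 0 (addMap (addMap A fun x => (-α) • x + 0) B₀) := by
    simpa using (hA₀.1.addMap hB₀).isMaxMonotoneOp_of_forall_exists (by norm_num)
      (hA₀.exists_sub_mem_addMap hB₀ (by fun_prop))
  have h := hS₀.addMap_smul_add (α + β) 0
  rw [zero_add, addMap_addMap, addMap_addMap] at h
  rwa [show (fun x => (-α) • x + 0 + (B₀ x + ((α + β) • x + 0))) = B by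
    funext x; simp only [B₀]; module] at h

end

/-- Maximality of the sum: if `A` is maximally `α_A`-monotone and the single-valued `B` is
`α_B`-monotone and continuous, then `A + B` is maximally `(α_A + α_B)`-monotone; consequently
the resolvent `J_{(θ/(σ_A+σ_B))(A+B)}` has full domain (and single values). -/
theorem sum_maximally_monotone {H : Type*} [NormedAddCommGroup H] [InnerProductSpace ℝ H]
    [CompleteSpace H]
    (A : H → Set H) (B : H → H) (αA αB : ℝ)
    (hA : IsMaxMonotoneOp αA A)
    (hBmono : IsMonotoneOp αB (fun x => {B x}))
    (hBcont : Continuous B) :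
    IsMaxMonotoneOp (αA + αB) (fun x => {w : H | ∃ u ∈ A x, w = u + B x}) ∧
      ∀ θ σA σB : ℝ, 0 < θ → 0 < σA → 0 < σB →
        0 < θ * αA + σA → 0 < θ * αB + σB →
        ∀ q : H, ∃! z : H, q - z ∈ (θ / (σA + σB)) • {w : H | ∃ u ∈ A z, w = u + B z} := by
  have hS : IsMaxMonotoneOp (αA + αB) (addMap A B) := hA.addMap_of_continuous hBmono hBcont
  refine ⟨hS, fun θ σA σB hθ hσA hσB hθA hθB => (hS.smul (by positivity)).existsUnique_sub_mem ?_⟩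
  rw [div_mul_eq_mul_div, lt_div_iff₀ (by positivity)]
  linarith
end

section
/- (Strengthened Ryu splitting.) Let A, B, C be set-valued operators on H that are maximally α_A-monotone, maximally α_B-monotone and maximally α_C-monotone respectively, let θ > 0 and σ_A, σ_B, σ_C ≥ 0 satisfy θα_A + σ_A > 0, θα_B + σ_B > 0, θα_C + σ_C > 0 and σ := σ_A + σ_B + σ_C > 0, let γ > 0, let λ ∈ (0,1], and let q ∈ H be such that there exists z ∈ H with q − z ∈ (θ/σ)•(A+B+C)(z). Let (x_k), (y_k), (u_k), (v_k), (w_k) be sequences in H such that for all k: (1/(1+γσ_A))·(x_k + γσ_A·q) − u_k ∈ (γθ/(1+γσ_A))•A(u_k); (1/(1+γσ_B))·(u_k + y_k − (1−γσ_B)q) − v_k ∈ (γθ/(1+γσ_B))•B(v_k); (1/(1+γσ_C))·(u_k − x_k + v_k − y_k) + q − w_k ∈ (γθ/(1+γσ_C))•C(w_k); x_{k+1} = x_k + λ(w_k − u_k); and y_{k+1} = y_k + λ(w_k − v_k). Then: (a) the point x⋆ ∈ H with q − x⋆ ∈ (θ/σ)•(A+B+C)(x⋆) is unique and u_k → x⋆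 in norm; (b) if λ ≠ 1, there is x ∈ H with x_k ⇀ x weakly and (1/(1+γσ_A))·(x + γσ_A·q) − x⋆ ∈ (γθ/(1+γσ_A))•A(x⋆). -/
open scoped RealInnerProductSpace Pointwise
open Filter Topology

/-!
For every pair `(X, Y)` fixed by the iteration with `u = v = w = x⋆`, monotonicity of the three
operators and a polarization identity give the Fejér inequality
`‖x_{k+1} - X‖² + ‖y_{k+1} - Y‖² + 2λγ ∑ (θα_• + σ_•) ‖•_k - x⋆‖² ≤ ‖x_k - X‖² + ‖y_k - Y‖²`.
As every `θα_• + σ_•` is positive, `u_k`, `v_k`, `w_k` converge strongly to `x⋆`. Graphs of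
maximally monotone operators are closed under strong × weak limits, so every weak cluster point
of `(x_k, y_k)` in the `ℓ²` product `H × H` is again such a fixed pair, and Opial's lemma yields
weak convergence. Uniqueness of `x⋆` is the strong monotonicity of `A + B + C`.
-/
section WeakConvergence

variable {E : Type*} [NormedAddCommGroup E] [InnerProductSpace ℝ E]

def WeakTendsto (f : ℕ → E) (p : E) : Prop :=
  ∀ w : E, Tendsto (fun k => ⟪f k, w⟫) atTop (𝓝 ⟪p, w⟫)

variable {f g : ℕ → E} {p p' : E}

theorem Filter.Tendsto.weakTendsto (h : Tendsto f atTop (𝓝 p)) : WeakTendsto f p :=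
  fun _ => h.inner tendsto_const_nhds

theorem weakTendsto_const : WeakTendsto (fun _ => p) p := fun _ => tendsto_const_nhds

namespace WeakTendsto

theorem add (hf : WeakTendsto f p) (hg : WeakTendsto g p') :
    WeakTendsto (fun k => f k + g k) (p + p') := fun w => by
  simpa only [inner_add_left] using (hf w).add (hg w)

theorem sub (hf : WeakTendsto f p) (hg : WeakTendsto g p') :
    WeakTendsto (fun k => f k - g k) (p - p') := fun w => by
  simpa only [inner_sub_left] using (hf w).sub (hg w)

theorem const_smul (hf : WeakTendsto f p) (c : ℝ) : WeakTendsto (fun k => c • f k) (c • p) :=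
  fun w => by simpa only [real_inner_smul_left] using (hf w).const_mul c

theorem exists_norm_le [CompleteSpace E] (hf : WeakTendsto f p) : ∃ M, ∀ k, ‖f k‖ ≤ M := by
  obtain ⟨M, hM⟩ := banach_steinhaus (g := fun k => innerSL ℝ (f k)) fun w => by
    obtain ⟨C, hC⟩ := isBounded_iff_forall_norm_le.mp
      (Metric.isBounded_range_of_tendsto _ (hf w))
    exact ⟨C, fun k => hC _ ⟨k, rfl⟩⟩
  exact ⟨M, fun k => by simpa only [innerSL_apply_norm] using hM k⟩

theorem tendsto_inner [CompleteSpace E] (hf : WeakTendsto f p) (hg : Tendsto g atTop (𝓝 p')) :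
    Tendsto (fun k => ⟪f k, g k⟫) atTop (𝓝 ⟪p, p'⟫) := by
  obtain ⟨M, hM⟩ := hf.exists_norm_le
  have hsmall : Tendsto (fun k => ⟪f k, g k - p'⟫) atTop (𝓝 0) := by
    have hM' := (tendsto_iff_norm_sub_tendsto_zero.mp hg).const_mul M
    rw [mul_zero] at hM'
    exact squeeze_zero_norm (fun k =>
      (norm_inner_le_norm _ _).trans (mul_le_mul_of_nonneg_right (hM k) (norm_nonneg _))) hM'
  simpa [inner_sub_right] using hsmall.add (hf p')

end WeakTendsto

theorem exists_strictMono_weakTendsto [CompleteSpace E] {z : ℕ → E} {M : ℝ}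
    (hM : ∀ k, ‖z k‖ ≤ M) : ∃ p, ∃ φ : ℕ → ℕ, StrictMono φ ∧ WeakTendsto (z ∘ φ) p := by
  -- sequential Banach–Alaoglu in the separable closed span `K` of the sequence, through Riesz
  set K := (Submodule.span ℝ (Set.range z)).topologicalClosure
  have hzK : ∀ k, z k ∈ K := fun k =>
    Submodule.le_topologicalClosure _ (Submodule.subset_span ⟨k, rfl⟩)
  have : TopologicalSpace.SeparableSpace K :=
    ((Set.countable_range z).isSeparable.span (R := ℝ)).closure.separableSpace
  obtain ⟨f, -, φ, hφ, hlim⟩ := WeakDual.isSeqCompact_closedBall ℝ K 0 M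
    (x := fun k => WeakDual.toStrongDual.symm (InnerProductSpace.toDual ℝ K ⟨z k, hzK k⟩))
    fun k => by simpa using hM k
  refine ⟨(InnerProductSpace.toDual ℝ K).symm (WeakDual.toStrongDual f), φ, hφ, fun w => ?_⟩
  have : Tendsto (fun k => InnerProductSpace.toDual ℝ K ⟨z (φ k), hzK _⟩
      (K.orthogonalProjectionOnto w)) atTop (𝓝 (f (K.orthogonalProjectionOnto w))) :=
    tendsto_iff_forall_eval_tendsto_topDualPairing.mp hlim _
  rw [← Submodule.inner_orthogonalProjectionOnto_eq_of_mem_left,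
    InnerProductSpace.toDual_symm_apply]
  simpa using this

theorem WeakTendsto.eq_of_tendsto_norm {z : ℕ → E} {φ ψ : ℕ → ℕ} {a a' : ℝ}
    (hφ : Tendsto φ atTop atTop) (hψ : Tendsto ψ atTop atTop)
    (hp : WeakTendsto (z ∘ φ) p) (hp' : WeakTendsto (z ∘ ψ) p')
    (ha : Tendsto (fun k => ‖z k - p‖) atTop (𝓝 a))
    (ha' : Tendsto (fun k => ‖z k - p'‖) atTop (𝓝 a')) : p = p' := by
  -- up to constants, `2⟪z k, p' - p⟫` is the difference of `‖z k - p‖²` and `‖z k - p'‖²`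
  have hconv : Tendsto (fun k => ⟪z k, p' - p⟫) atTop
      (𝓝 ((a ^ 2 - a' ^ 2 - ‖p‖ ^ 2 + ‖p'‖ ^ 2) / 2)) := by
    refine (((ha.pow 2).sub (ha'.pow 2)).sub_const _ |>.add_const _ |>.div_const 2).congr
      fun k => ?_
    simp only [norm_sub_sq_real, inner_sub_right]
    ring
  have h1 := tendsto_nhds_unique (hp (p' - p)) (hconv.comp hφ)
  have h2 := tendsto_nhds_unique (hp' (p' - p)) (hconv.comp hψ)
  have : ⟪p' - p, p' - p⟫ = 0 := by rw [inner_sub_left, h1, h2, sub_self]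
  exact (sub_eq_zero.mp (inner_self_eq_zero.mp this)).symm

/-- Opial's lemma. -/
theorem exists_weakTendsto_of_fejer [CompleteSpace E] {z : ℕ → E} {F : Set E}
    (hne : F.Nonempty) (hfejer : ∀ p ∈ F, Antitone fun k => ‖z k - p‖)
    (hcluster : ∀ φ : ℕ → ℕ, Tendsto φ atTop atTop → ∀ p, WeakTendsto (z ∘ φ) p → p ∈ F) :
    ∃ p ∈ F, WeakTendsto z p := by
  obtain ⟨p₀, hp₀⟩ := hne
  have hbound : ∀ k, ‖z k‖ ≤ ‖z 0 - p₀‖ + ‖p₀‖ := fun k =>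
    (norm_le_norm_sub_add (z k) p₀).trans (add_le_add_left (hfejer p₀ hp₀ k.zero_le) _)
  have hlim : ∀ p ∈ F, Tendsto (fun k => ‖z k - p‖) atTop (𝓝 (⨅ k, ‖z k - p‖)) := fun p hp =>
    tendsto_atTop_ciInf (hfejer p hp) ⟨0, by rintro _ ⟨k, rfl⟩; positivity⟩
  obtain ⟨p, φ, hφ, hp⟩ := exists_strictMono_weakTendsto hbound
  have hpF := hcluster φ hφ.tendsto_atTop p hp
  refine ⟨p, hpF, fun w => tendsto_of_subseq_tendsto fun ns hns => ?_⟩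
  obtain ⟨p', ms, hms, hp'⟩ := exists_strictMono_weakTendsto (z := z ∘ ns) fun k => hbound _
  have hns' : Tendsto (ns ∘ ms) atTop atTop := hns.comp hms.tendsto_atTop
  have hp'F := hcluster _ hns' p' hp'
  obtain rfl :=
    WeakTendsto.eq_of_tendsto_norm hφ.tendsto_atTop hns' hp hp' (hlim p hpF) (hlim p' hp'F)
  exact ⟨ms, hp' w⟩

theorem WeakTendsto.fst {F : Type*} [NormedAddCommGroup F] [InnerProductSpace ℝ F]
    {f : ℕ → WithLp 2 (E × F)} {p : WithLp 2 (E × F)} (hf : WeakTendsto f p) :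
    WeakTendsto (fun k => (f k).fst) p.fst := fun w => by
  simpa using hf (WithLp.toLp 2 (w, 0))

theorem WeakTendsto.snd {F : Type*} [NormedAddCommGroup F] [InnerProductSpace ℝ F]
    {f : ℕ → WithLp 2 (E × F)} {p : WithLp 2 (E × F)} (hf : WeakTendsto f p) :
    WeakTendsto (fun k => (f k).snd) p.snd := fun w => by
  simpa using hf (WithLp.toLp 2 (0, w))

end WeakConvergence

theorem tendsto_of_add_mul_norm_sub_sq_le {E : Type*} [NormedAddCommGroup E] {V : ℕ → ℝ}
    {g : ℕ → E} {z : E} {c : ℝ} (hV : ∀ k, 0 ≤ V k) (hc : 0 < c)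
    (h : ∀ k, V (k + 1) + c * ‖g k - z‖ ^ 2 ≤ V k) : Tendsto g atTop (𝓝 z) := by
  have hanti : Antitone V := antitone_nat_of_succ_le fun k => by nlinarith [h k]
  have hlim := tendsto_atTop_ciInf hanti ⟨0, by rintro _ ⟨k, rfl⟩; exact hV k⟩
  have hdiff : Tendsto (fun k => (V k - V (k + 1)) / c) atTop (𝓝 0) := by
    simpa using (hlim.sub (hlim.comp (tendsto_add_atTop_nat 1))).div_const c
  have hsq : Tendsto (fun k => ‖g k - z‖ ^ 2) atTop (𝓝 0) :=
    squeeze_zero (fun _ => sq_nonneg _) (fun k => by rw [le_div_iff₀ hc]; linarith [h k]) hdiff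
  rw [tendsto_iff_norm_sub_tendsto_zero]
  simpa [Real.sqrt_sq (norm_nonneg _)] using hsq.sqrt

theorem one_div_smul_sub_mem_div_smul_iff {H : Type*} [AddCommGroup H] [Module ℝ H]
    {S : Set H} {c ρ : ℝ} (hc : c ≠ 0) {d g : H} :
    (1 / c) • d - g ∈ (ρ / c) • S ↔ ∃ a ∈ S, d - c • g = ρ • a := by
  refine exists_congr fun a => and_congr_right fun _ => ?_
  rw [← smul_right_inj hc, smul_sub, smul_smul, smul_smul, mul_div_cancel₀ _ hc,
    mul_one_div_cancel hc, one_smul, eq_comm]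

section MonotoneOperators

variable {H : Type*} [NormedAddCommGroup H] [InnerProductSpace ℝ H] {A B : H → Set H} {α β : ℝ}

theorem IsMonotoneOp.add (hA : IsMonotoneOp α A) (hB : IsMonotoneOp β B) :
    IsMonotoneOp (α + β) (A + B) := by
  rintro x y _ _ ⟨a, ha, b, hb, rfl⟩ ⟨a', ha', b', hb', rfl⟩
  have hab := hA x y a a' ha ha'
  have hbb := hB x y b b' hb hb'
  rw [add_sub_add_comm, inner_add_right]
  linarith

theorem IsMonotoneOp.eq_of_sub_mem_smul (hA : IsMonotoneOp α A) {τ : ℝ} (hτ : 0 ≤ τ)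
    (hτα : 0 < 1 + τ * α) {q z z' : H} (hz : q - z ∈ τ • A z) (hz' : q - z' ∈ τ • A z') :
    z = z' := by
  obtain ⟨a, ha, hqa⟩ := Set.mem_smul_set.mp hz
  obtain ⟨a', ha', hqa'⟩ := Set.mem_smul_set.mp hz'
  have hmono := mul_le_mul_of_nonneg_left (hA z z' a a' ha ha') hτ
  have hdiff : z - z' = -(τ • (a - a')) := by
    linear_combination (norm := module) hqa - hqa'
  have hinner : ‖z - z'‖ ^ 2 = -(τ * ⟪z - z', a - a'⟫) := by
    rw [← real_inner_self_eq_norm_sq, ← real_inner_smul_right, ← inner_neg_right, ← hdiff]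
  have hsq : (1 + τ * α) * ‖z - z'‖ ^ 2 ≤ 0 := by nlinarith
  have : ‖z - z'‖ ^ 2 = 0 := le_antisymm (nonpos_of_mul_nonpos_right hsq hτα) (sq_nonneg _)
  simpa [sub_eq_zero] using this

theorem IsMonotoneOp.mul_norm_sq_le_inner (hA : IsMonotoneOp α A) {ρ t : ℝ} (hρ : 0 ≤ ρ)
    {d d' u u' a a' : H} (ha : a ∈ A u) (ha' : a' ∈ A u')
    (h : d - (1 + t) • u = ρ • a) (h' : d' - (1 + t) • u' = ρ • a') :
    (ρ * α + t) * ‖u - u'‖ ^ 2 ≤ ⟪u - u', (d - d') - (u - u')⟫ := by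
  have hres : (d - d') - (u - u') = ρ • (a - a') + t • (u - u') := by
    linear_combination (norm := module) h - h'
  rw [hres, inner_add_right, real_inner_smul_right, real_inner_smul_right,
    real_inner_self_eq_norm_sq]
  nlinarith [mul_le_mul_of_nonneg_left (hA u u' a a' ha ha') hρ]

theorem IsMaxMonotoneOp.mem_of_tendsto_of_weakTendsto [CompleteSpace H]
    (hA : IsMaxMonotoneOp α A) {u a : ℕ → H} {z a₀ : H} (hu : Tendsto u atTop (𝓝 z))
    (ha : WeakTendsto a a₀) (hmem : ∀ k, a k ∈ A (u k)) : a₀ ∈ A z := by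
  refine hA.2 z a₀ fun y b hb => le_of_tendsto_of_tendsto'
    (((hu.sub_const y).norm.pow 2).const_mul α) ?_ fun k => hA.1 _ _ _ _ (hmem k) hb
  simpa only [real_inner_comm] using
    (ha.sub tendsto_const_nhds.weakTendsto).tendsto_inner (hu.sub_const y)

theorem IsMaxMonotoneOp.exists_of_weakTendsto [CompleteSpace H] (hA : IsMaxMonotoneOp α A)
    {ρ t : ℝ} (hρ : ρ ≠ 0) {d u a : ℕ → H} {D z : H} (hd : WeakTendsto d D)
    (hu : Tendsto u atTop (𝓝 z)) (ha : ∀ k, a k ∈ A (u k))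
    (h : ∀ k, d k - (1 + t) • u k = ρ • a k) : ∃ a₀ ∈ A z, D - (1 + t) • z = ρ • a₀ := by
  have ha_eq : a = fun k => ρ⁻¹ • (d k - (1 + t) • u k) := by
    funext k; rw [h k, inv_smul_smul₀ hρ]
  refine ⟨ρ⁻¹ • (D - (1 + t) • z), hA.mem_of_tendsto_of_weakTendsto hu ?_ ha,
    (smul_inv_smul₀ hρ _).symm⟩
  rw [ha_eq]
  exact (hd.sub (hu.const_smul (1 + t)).weakTendsto).const_smul ρ⁻¹

end MonotoneOperators

section RyuSplitting

variable {H : Type*} [NormedAddCommGroup H] [InnerProductSpace ℝ H]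
  {A B C : H → Set H} {ρ tA tB tC : ℝ} {q : H}

/-- One pass of the iteration with `ρ = γθ` and `t_• = γσ_•`, the resolvent inclusions cleared
of the factors `1 / (1 + t_•)`. -/
def IsRyuStep (A B C : H → Set H) (ρ tA tB tC : ℝ) (q x y u v w : H) : Prop :=
  (∃ a ∈ A u, x + tA • q - (1 + tA) • u = ρ • a) ∧
    (∃ b ∈ B v, u + y - (1 - tB) • q - (1 + tB) • v = ρ • b) ∧
    ∃ c ∈ C w, u - x + v - y + (1 + tC) • q - (1 + tC) • w = ρ • c

theorem isRyuStep_fixed {z a b c : H} (ha : a ∈ A z) (hb : b ∈ B z) (hc : c ∈ C z)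
    (hsum : (tA + tB + tC) • (q - z) = ρ • (a + b + c)) :
    IsRyuStep A B C ρ tA tB tC q (z + ρ • a + tA • (z - q)) (q + ρ • b + tB • (z - q)) z z z :=
  ⟨⟨a, ha, by module⟩, ⟨b, hb, by module⟩, c, hc, by linear_combination (norm := module) hsum⟩

-- `e, f, p, r, s` stand for `x - X, y - Y, u - z, v - z, w - z`
theorem ryu_identity (e f p r s : H) (lam : ℝ) :
    2 * lam * (⟪p, e - p⟫ + ⟪r, p + f - r⟫ + ⟪s, p - e + r - f - s⟫) =
      ‖e‖ ^ 2 - ‖e - lam • (p - s)‖ ^ 2 + ‖f‖ ^ 2 - ‖f - lam • (r - s)‖ ^ 2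
        + lam * (lam - 1) * (‖p - s‖ ^ 2 + ‖r - s‖ ^ 2) - lam * ‖p - r‖ ^ 2 := by
  simp only [← real_inner_self_eq_norm_sq, inner_sub_left, inner_sub_right, inner_add_right,
    real_inner_smul_left, real_inner_smul_right]
  simp only [real_inner_comm p e, real_inner_comm s e, real_inner_comm r f, real_inner_comm s f,
    real_inner_comm r p, real_inner_comm s p, real_inner_comm s r]
  ring

theorem IsRyuStep.norm_sq_add_le {αA αB αC lam : ℝ} (hA : IsMonotoneOp αA A)
    (hB : IsMonotoneOp αB B) (hC : IsMonotoneOp αC C) (hρ : 0 ≤ ρ) (hlam : 0 ≤ lam)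
    (hlam1 : lam ≤ 1) {x y u v w X Y z : H} (h : IsRyuStep A B C ρ tA tB tC q x y u v w)
    (hfix : IsRyuStep A B C ρ tA tB tC q X Y z z z) :
    ‖x + lam • (w - u) - X‖ ^ 2 + ‖y + lam • (w - v) - Y‖ ^ 2
        + 2 * lam * ((ρ * αA + tA) * ‖u - z‖ ^ 2 + (ρ * αB + tB) * ‖v - z‖ ^ 2
          + (ρ * αC + tC) * ‖w - z‖ ^ 2)
      ≤ ‖x - X‖ ^ 2 + ‖y - Y‖ ^ 2 := by
  obtain ⟨⟨a, ha, hxa⟩, ⟨b, hb, hyb⟩, c, hc, hwc⟩ := h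
  obtain ⟨⟨a', ha', hXa⟩, ⟨b', hb', hYb⟩, c', hc', hzc⟩ := hfix
  have iA := hA.mul_norm_sq_le_inner hρ ha ha' hxa hXa
  have iB := hB.mul_norm_sq_le_inner hρ hb hb' hyb hYb
  have iC := hC.mul_norm_sq_le_inner hρ hc hc' hwc hzc
  rw [show x + tA • q - (X + tA • q) - (u - z) = (x - X) - (u - z) by abel] at iA
  rw [show u + y - (1 - tB) • q - (z + Y - (1 - tB) • q) - (v - z)
      = (u - z) + (y - Y) - (v - z) by abel] at iB
  rw [show u - x + v - y + (1 + tC) • q - (z - X + z - Y + (1 + tC) • q) - (w - z)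
      = (u - z) - (x - X) + (v - z) - (y - Y) - (w - z) by abel] at iC
  rw [show x + lam • (w - u) - X = (x - X) - lam • ((u - z) - (w - z)) by module,
    show y + lam • (w - v) - Y = (y - Y) - lam • ((v - z) - (w - z)) by module]
  have key := ryu_identity (x - X) (y - Y) (u - z) (v - z) (w - z) lam
  have hdamp : 0 ≤ lam * (1 - lam) * (‖(u - z) - (w - z)‖ ^ 2 + ‖(v - z) - (w - z)‖ ^ 2) := by
    have : 0 ≤ 1 - lam := by linarith
    positivity
  nlinarith [mul_nonneg hlam (sq_nonneg ‖(u - z) - (v - z)‖)]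

theorem isRyuStep_of_mem (htA : 0 ≤ tA) (htB : 0 ≤ tB) (htC : 0 ≤ tC) {x y u v w : H}
    (hu : (1 / (1 + tA)) • (x + tA • q) - u ∈ (ρ / (1 + tA)) • A u)
    (hv : (1 / (1 + tB)) • (u + y - (1 - tB) • q) - v ∈ (ρ / (1 + tB)) • B v)
    (hw : (1 / (1 + tC)) • (u - x + v - y) + q - w ∈ (ρ / (1 + tC)) • C w) :
    IsRyuStep A B C ρ tA tB tC q x y u v w := by
  have htC' : (1 + tC) ≠ 0 := by positivity
  refine ⟨(one_div_smul_sub_mem_div_smul_iff (by positivity)).mp hu,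
    (one_div_smul_sub_mem_div_smul_iff (by positivity)).mp hv,
    (one_div_smul_sub_mem_div_smul_iff htC').mp ?_⟩
  rwa [smul_add, smul_smul, one_div_mul_cancel htC', one_smul]

theorem exists_isRyuStep_fixed {γ θ σA σB σC : ℝ} (hσ : σA + σB + σC ≠ 0) {z : H}
    (hz : q - z ∈ (θ / (σA + σB + σC)) • (A + B + C) z) :
    ∃ X Y, IsRyuStep A B C (γ * θ) (γ * σA) (γ * σB) (γ * σC) q X Y z z z := by
  obtain ⟨_, ⟨_, ⟨a, ha, b, hb, rfl⟩, c, hc, rfl⟩, hs⟩ := Set.mem_smul_set.mp hz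
  refine ⟨_, _, isRyuStep_fixed ha hb hc ?_⟩
  rw [← hs, smul_smul]
  congr 1
  field_simp

structure IsRyuIteration (A B C : H → Set H) (ρ tA tB tC lam : ℝ) (q : H)
    (x y u v w : ℕ → H) : Prop where
  step : ∀ k, IsRyuStep A B C ρ tA tB tC q (x k) (y k) (u k) (v k) (w k)
  x_succ : ∀ k, x (k + 1) = x k + lam • (w k - u k)
  y_succ : ∀ k, y (k + 1) = y k + lam • (w k - v k)

namespace IsRyuIteration

variable {lam αA αB αC : ℝ} {x y u v w : ℕ → H} {X Y z : H}

theorem norm_sq_succ_add_le (hit : IsRyuIteration A B C ρ tA tB tC lam q x y u v w)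
    (hA : IsMonotoneOp αA A) (hB : IsMonotoneOp αB B) (hC : IsMonotoneOp αC C) (hρ : 0 ≤ ρ)
    (hlam : 0 ≤ lam) (hlam1 : lam ≤ 1) (hfix : IsRyuStep A B C ρ tA tB tC q X Y z z z) (k : ℕ) :
    ‖x (k + 1) - X‖ ^ 2 + ‖y (k + 1) - Y‖ ^ 2
        + 2 * lam * ((ρ * αA + tA) * ‖u k - z‖ ^ 2 + (ρ * αB + tB) * ‖v k - z‖ ^ 2
          + (ρ * αC + tC) * ‖w k - z‖ ^ 2)
      ≤ ‖x k - X‖ ^ 2 + ‖y k - Y‖ ^ 2 := by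
  rw [hit.x_succ, hit.y_succ]
  exact (hit.step k).norm_sq_add_le hA hB hC hρ hlam hlam1 hfix

theorem tendsto (hit : IsRyuIteration A B C ρ tA tB tC lam q x y u v w)
    (hA : IsMonotoneOp αA A) (hB : IsMonotoneOp αB B) (hC : IsMonotoneOp αC C) (hρ : 0 ≤ ρ)
    (hlam : 0 < lam) (hlam1 : lam ≤ 1) (hcA : 0 < ρ * αA + tA) (hcB : 0 < ρ * αB + tB)
    (hcC : 0 < ρ * αC + tC) (hfix : IsRyuStep A B C ρ tA tB tC q X Y z z z) :
    Tendsto u atTop (𝓝 z) ∧ Tendsto v atTop (𝓝 z) ∧ Tendsto w atTop (𝓝 z) := by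
  have h := hit.norm_sq_succ_add_le hA hB hC hρ hlam.le hlam1 hfix
  have hV : ∀ k, 0 ≤ ‖x k - X‖ ^ 2 + ‖y k - Y‖ ^ 2 := fun k => by positivity
  have hu : ∀ k, 0 ≤ (ρ * αA + tA) * ‖u k - z‖ ^ 2 := fun k => by positivity
  have hv : ∀ k, 0 ≤ (ρ * αB + tB) * ‖v k - z‖ ^ 2 := fun k => by positivity
  have hw : ∀ k, 0 ≤ (ρ * αC + tC) * ‖w k - z‖ ^ 2 := fun k => by positivity
  refine ⟨tendsto_of_add_mul_norm_sub_sq_le hV (c := 2 * lam * (ρ * αA + tA)) (by positivity)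
      fun k => ?_, tendsto_of_add_mul_norm_sub_sq_le hV (c := 2 * lam * (ρ * αB + tB))
      (by positivity) fun k => ?_, tendsto_of_add_mul_norm_sub_sq_le hV
      (c := 2 * lam * (ρ * αC + tC)) (by positivity) fun k => ?_⟩ <;>
  nlinarith [h k, hu k, hv k, hw k]

theorem antitone (hit : IsRyuIteration A B C ρ tA tB tC lam q x y u v w)
    (hA : IsMonotoneOp αA A) (hB : IsMonotoneOp αB B) (hC : IsMonotoneOp αC C) (hρ : 0 ≤ ρ)
    (hlam : 0 ≤ lam) (hlam1 : lam ≤ 1) (hcA : 0 ≤ ρ * αA + tA) (hcB : 0 ≤ ρ * αB + tB)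
    (hcC : 0 ≤ ρ * αC + tC) {P : WithLp 2 (H × H)}
    (hfix : IsRyuStep A B C ρ tA tB tC q P.fst P.snd z z z) :
    Antitone fun k => ‖WithLp.toLp 2 (x k, y k) - P‖ := by
  refine antitone_nat_of_succ_le fun k => (pow_le_pow_iff_left₀ (norm_nonneg _) (norm_nonneg _)
    two_ne_zero).mp ?_
  simp only [WithLp.prod_norm_sq_eq_of_L2, WithLp.sub_fst, WithLp.sub_snd, WithLp.toLp_fst,
    WithLp.toLp_snd]
  have hstep := hit.norm_sq_succ_add_le hA hB hC hρ hlam hlam1 hfix k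
  have hgain : 0 ≤ 2 * lam * ((ρ * αA + tA) * ‖u k - z‖ ^ 2 + (ρ * αB + tB) * ‖v k - z‖ ^ 2
      + (ρ * αC + tC) * ‖w k - z‖ ^ 2) := by positivity
  linarith

theorem isRyuStep_of_weakTendsto [CompleteSpace H]
    (hit : IsRyuIteration A B C ρ tA tB tC lam q x y u v w) (hA : IsMaxMonotoneOp αA A)
    (hB : IsMaxMonotoneOp αB B) (hC : IsMaxMonotoneOp αC C) (hρ : ρ ≠ 0)
    (hu : Tendsto u atTop (𝓝 z)) (hv : Tendsto v atTop (𝓝 z)) (hw : Tendsto w atTop (𝓝 z))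
    {φ : ℕ → ℕ} (hφ : Tendsto φ atTop atTop) (hX : WeakTendsto (x ∘ φ) X)
    (hY : WeakTendsto (y ∘ φ) Y) : IsRyuStep A B C ρ tA tB tC q X Y z z z := by
  choose a ha hxa using fun k => (hit.step k).1
  choose b hb hyb using fun k => (hit.step k).2.1
  choose c hc hwc using fun k => (hit.step k).2.2
  have hu' := (hu.comp hφ).weakTendsto
  have hv' := (hv.comp hφ).weakTendsto
  exact ⟨hA.exists_of_weakTendsto hρ (hX.add weakTendsto_const) (hu.comp hφ)
      (fun j => ha (φ j)) fun j => hxa (φ j),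
    hB.exists_of_weakTendsto hρ ((hu'.add hY).sub weakTendsto_const) (hv.comp hφ)
      (fun j => hb (φ j)) fun j => hyb (φ j),
    hC.exists_of_weakTendsto hρ ((((hu'.sub hX).add hv').sub hY).add weakTendsto_const)
      (hw.comp hφ) (fun j => hc (φ j)) fun j => hwc (φ j)⟩

theorem exists_weakTendsto [CompleteSpace H]
    (hit : IsRyuIteration A B C ρ tA tB tC lam q x y u v w) (hA : IsMaxMonotoneOp αA A)
    (hB : IsMaxMonotoneOp αB B) (hC : IsMaxMonotoneOp αC C) (hρ : 0 < ρ)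
    (hlam : 0 ≤ lam) (hlam1 : lam ≤ 1) (hcA : 0 ≤ ρ * αA + tA) (hcB : 0 ≤ ρ * αB + tB)
    (hcC : 0 ≤ ρ * αC + tC) (hu : Tendsto u atTop (𝓝 z)) (hv : Tendsto v atTop (𝓝 z))
    (hw : Tendsto w atTop (𝓝 z)) (hfix : IsRyuStep A B C ρ tA tB tC q X Y z z z) :
    ∃ X' Y', IsRyuStep A B C ρ tA tB tC q X' Y' z z z ∧ WeakTendsto x X' := by
  obtain ⟨P, hP, hPw⟩ := exists_weakTendsto_of_fejer
    (z := fun k => WithLp.toLp 2 (x k, y k))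
    (F := {P | IsRyuStep A B C ρ tA tB tC q P.fst P.snd z z z}) ⟨WithLp.toLp 2 (X, Y), hfix⟩
    (fun P hP => hit.antitone hA.1 hB.1 hC.1 hρ.le hlam hlam1 hcA hcB hcC hP)
    fun φ hφ P hPφ => hit.isRyuStep_of_weakTendsto hA hB hC hρ.ne' hu hv hw hφ hPφ.fst hPφ.snd
  exact ⟨P.fst, P.snd, hP, hPw.fst⟩

end IsRyuIteration

end RyuSplitting

/-- Strengthened Ryu splitting: `(u_k)` converges strongly to the unique `x⋆` with
`q − x⋆ ∈ (θ/σ)•(A+B+C)(x⋆)`; if `λ ≠ 1`, `(x_k)` converges weakly to a point `x` whose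
strengthened resolvent image is `x⋆`. -/
theorem strengthened_ryu_splitting {H : Type*} [NormedAddCommGroup H]
    [InnerProductSpace ℝ H] [CompleteSpace H]
    (A B C : H → Set H) (αA αB αC θ σA σB σC γ lam : ℝ) (q : H)
    (hA : IsMaxMonotoneOp αA A) (hB : IsMaxMonotoneOp αB B) (hC : IsMaxMonotoneOp αC C)
    (hθ : 0 < θ) (hσA : 0 ≤ σA) (hσB : 0 ≤ σB) (hσC : 0 ≤ σC)
    (hA' : 0 < θ * αA + σA) (hB' : 0 < θ * αB + σB) (hC' : 0 < θ * αC + σC)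
    (hσ : 0 < σA + σB + σC)
    (hγ : 0 < γ) (hlam : 0 < lam) (hlam' : lam ≤ 1)
    (hran : ∃ z : H, q - z ∈
      (θ / (σA + σB + σC)) • {s : H | ∃ a ∈ A z, ∃ b ∈ B z, ∃ c ∈ C z, s = a + b + c})
    (x y u v w : ℕ → H)
    (hu : ∀ k : ℕ, (1 / (1 + γ * σA)) • (x k + (γ * σA) • q) - u k ∈
        (γ * θ / (1 + γ * σA)) • A (u k))
    (hv : ∀ k : ℕ, (1 / (1 + γ * σB)) • (u k + y k - (1 - γ * σB) • q) - v k ∈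
        (γ * θ / (1 + γ * σB)) • B (v k))
    (hw : ∀ k : ℕ, (1 / (1 + γ * σC)) • (u k - x k + v k - y k) + q - w k ∈
        (γ * θ / (1 + γ * σC)) • C (w k))
    (hx : ∀ k : ℕ, x (k + 1) = x k + lam • (w k - u k))
    (hy : ∀ k : ℕ, y (k + 1) = y k + lam • (w k - v k)) :
    ∃ xs : H,
      (q - xs ∈
          (θ / (σA + σB + σC)) • {s : H | ∃ a ∈ A xs, ∃ b ∈ B xs, ∃ c ∈ C xs, s = a + b + c}) ∧
        (∀ z : H,
            q - z ∈
                (θ / (σA + σB + σC)) •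
                  {s : H | ∃ a ∈ A z, ∃ b ∈ B z, ∃ c ∈ C z, s = a + b + c} →
              z = xs) ∧
          Tendsto u atTop (𝓝 xs) ∧
            (lam ≠ 1 →
              ∃ xl : H,
                (∀ z : H, Tendsto (fun k => ⟪x k, z⟫) atTop (𝓝 ⟪xl, z⟫)) ∧
                  (1 / (1 + γ * σA)) • (xl + (γ * σA) • q) - xs ∈
                    (γ * θ / (1 + γ * σA)) • A xs) := by
  have hρ : 0 < γ * θ := mul_pos hγ hθ
  have hc : ∀ {α σ : ℝ}, 0 < θ * α + σ → 0 < γ * θ * α + γ * σ := fun h => by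
    rw [mul_assoc, ← mul_add]; exact mul_pos hγ h
  have hit : IsRyuIteration A B C (γ * θ) (γ * σA) (γ * σB) (γ * σC) lam q x y u v w :=
    ⟨fun k => isRyuStep_of_mem (by positivity) (by positivity) (by positivity) (hu k) (hv k)
      (hw k), hx, hy⟩
  have hsum : ∀ z, {s : H | ∃ a ∈ A z, ∃ b ∈ B z, ∃ c ∈ C z, s = a + b + c} = (A + B + C) z :=
    fun z => by ext s; simp [Set.mem_add, eq_comm, and_assoc]
  simp only [hsum] at hran ⊢
  obtain ⟨z, hz⟩ := hran
  have hτα : 0 < 1 + θ / (σA + σB + σC) * (αA + αB + αC) := by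
    rw [div_mul_eq_mul_div, one_add_div hσ.ne']
    exact div_pos (by linarith) hσ
  have huniq : ∀ z', q - z' ∈ (θ / (σA + σB + σC)) • (A + B + C) z' → z' = z := fun z' hz' =>
    ((hA.1.add hB.1).add hC.1).eq_of_sub_mem_smul (by positivity) hτα hz' hz
  obtain ⟨X, Y, hfix⟩ := exists_isRyuStep_fixed (γ := γ) hσ.ne' hz
  obtain ⟨hu_lim, hv_lim, hw_lim⟩ :=
    hit.tendsto hA.1 hB.1 hC.1 hρ.le hlam hlam' (hc hA') (hc hB') (hc hC') hfix
  refine ⟨z, hz, huniq, hu_lim, fun _ => ?_⟩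
  obtain ⟨X', _, hfix', hX'⟩ := hit.exists_weakTendsto hA hB hC hρ hlam.le hlam'
    (hc hA').le (hc hB').le (hc hC').le hu_lim hv_lim hw_lim hfix
  exact ⟨X', hX', (one_div_smul_sub_mem_div_smul_iff (by positivity)).mpr hfix'.1⟩
end
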